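/- arXiv:2509.16180 — 12 statements merged into one kernel-verified Lean document; each statement's English description precedes it below -/
import Mathlib

section
/- Let Q be a finite set of probability distributions on X, and let 𝒯 ⊆ {−1,1}^X be such that for all q, q' ∈ Q there exists T ∈ 𝒯 with |⟨q − q', T⟩| ≥ φ‖q − q'‖₁. For any distribution p and any real numbers (p̂_T)_{T∈𝒯}, the relaxed minimum distance estimate q̂ := argmin_{q∈Q} sup_{T∈𝒯} |⟨q,T⟩ − p̂_T| satisfies ‖q̂ − p‖₁ ≤ (1 + 2/φ)‖q* − p‖₁ + (2/φ)·sup_{T∈𝒯} |⟨p,T⟩ − p̂_T|, where q* is the distribution in Q closest to p in ℓ1. -/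
/-- Guarantee for the relaxed minimum distance estimator (RMDE): if the query family `𝒯`
distinguishes every pair of hypotheses in `Q` up to factor `φ`, then the minimizer `q̂` of
`sup_{T ∈ 𝒯} |⟨q, T⟩ - p̂_T|` over `q ∈ Q` satisfies
`‖q̂ - p‖₁ ≤ (1 + 2/φ)‖q* - p‖₁ + (2/φ) sup_{T ∈ 𝒯} |⟨p, T⟩ - p̂_T|`. -/
theorem stmt_2 {X : Type*} [Countable X] (φ : ℝ) (hφ : 0 < φ)
    (Q : Finset (X → ℝ)) (hQne : Q.Nonempty)
    (hQdist : ∀ q ∈ Q, (∀ x, 0 ≤ q x) ∧ HasSum q 1)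
    (𝒯 : Finset (X → ℝ)) (h𝒯ne : 𝒯.Nonempty)
    (h𝒯pm : ∀ T ∈ 𝒯, ∀ x, T x = 1 ∨ T x = -1)
    (hsep : ∀ q ∈ Q, ∀ q' ∈ Q, ∃ T ∈ 𝒯,
      φ * ∑' x, |q x - q' x| ≤ |∑' x, (q x - q' x) * T x|)
    (p : X → ℝ) (hp0 : ∀ x, 0 ≤ p x) (hp1 : HasSum p 1)
    (phat : (X → ℝ) → ℝ)
    (qhat : X → ℝ) (hqhatQ : qhat ∈ Q)
    (hqhat : ∀ q ∈ Q,
      𝒯.sup' h𝒯ne (fun T => |(∑' x, qhat x * T x) - phat T|) ≤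
        𝒯.sup' h𝒯ne (fun T => |(∑' x, q x * T x) - phat T|))
    (qstar : X → ℝ) (hqstarQ : qstar ∈ Q)
    (hqstar : ∀ q ∈ Q, ∑' x, |qstar x - p x| ≤ ∑' x, |q x - p x|) :
    ∑' x, |qhat x - p x| ≤
      (1 + 2 / φ) * ∑' x, |qstar x - p x| +
        (2 / φ) * 𝒯.sup' h𝒯ne (fun T => |(∑' x, p x * T x) - phat T|) := by
  have hps : Summable p := hp1.summable
  have hqhs : Summable qhat := (hQdist qhat hqhatQ).2.summable
  have hqss : Summable qstar := (hQdist qstar hqstarQ).2.summable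
  have hTabs : ∀ T ∈ 𝒯, ∀ x, |T x| = 1 := by
    intro T hT x; rcases h𝒯pm T hT x with h | h <;> simp [h]
  have hprod : ∀ (f : X → ℝ), Summable f → ∀ T ∈ 𝒯, Summable (fun x => f x * T x) := by
    intro f hf T hT
    have h : Summable (fun x => |f x * T x|) := by
      simp only [abs_mul, hTabs T hT, mul_one]
      exact hf.abs
    exact h.of_abs
  have habs : ∀ (f : X → ℝ), Summable f → ∀ T ∈ 𝒯,
      |∑' x, f x * T x| ≤ ∑' x, |f x| := by
    intro f hf T hT
    have h1 : |∑' x, f x * T x| ≤ ∑' x, |f x * T x| := by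
      have hs : Summable fun x => ‖f x * T x‖ := by
        simp only [Real.norm_eq_abs, abs_mul, hTabs T hT, mul_one]; exact hf.abs
      simpa only [Real.norm_eq_abs] using norm_tsum_le_tsum_norm hs
    calc |∑' x, f x * T x| ≤ ∑' x, |f x * T x| := h1
      _ = ∑' x, |f x| := by
        apply tsum_congr; intro x; rw [abs_mul, hTabs T hT, mul_one]
  set A := 𝒯.sup' h𝒯ne (fun T => |(∑' x, p x * T x) - phat T|) with hA
  set b := ∑' x, |qstar x - p x| with hb
  have hstar_sup : 𝒯.sup' h𝒯ne (fun T => |(∑' x, qstar x * T x) - phat T|) ≤ b + A := by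
    apply Finset.sup'_le
    intro T' hT'
    have h1 : |∑' x, (qstar x - p x) * T' x| ≤ b :=
      habs (fun x => qstar x - p x) (hqss.sub hps) T' hT'
    have h2 : |(∑' x, p x * T' x) - phat T'| ≤ A :=
      Finset.le_sup' (fun T => |(∑' x, p x * T x) - phat T|) hT'
    have hsub : ∑' x, (qstar x - p x) * T' x
        = (∑' x, qstar x * T' x) - ∑' x, p x * T' x := by
      rw [← Summable.tsum_sub (hprod _ hqss T' hT') (hprod _ hps T' hT')]
      apply tsum_congr; intro x; ring
    calc |(∑' x, qstar x * T' x) - phat T'|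
        = |(∑' x, (qstar x - p x) * T' x) + ((∑' x, p x * T' x) - phat T')| := by
          rw [hsub]; ring_nf
      _ ≤ |∑' x, (qstar x - p x) * T' x| + |(∑' x, p x * T' x) - phat T'| := abs_add_le _ _
      _ ≤ b + A := add_le_add h1 h2
  obtain ⟨T, hT, hsepT⟩ := hsep qhat hqhatQ qstar hqstarQ
  have h1 : |(∑' x, qhat x * T x) - phat T| ≤ b + A :=
    le_trans (Finset.le_sup' (fun T => |(∑' x, qhat x * T x) - phat T|) hT)
      (le_trans (hqhat qstar hqstarQ) hstar_sup)
  have h2 : |(∑' x, qstar x * T x) - phat T| ≤ b + A :=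
    le_trans (Finset.le_sup' (fun T => |(∑' x, qstar x * T x) - phat T|) hT) hstar_sup
  have heq : ∑' x, (qhat x - qstar x) * T x
      = (∑' x, qhat x * T x) - ∑' x, qstar x * T x := by
    rw [← Summable.tsum_sub (hprod _ hqhs T hT) (hprod _ hqss T hT)]
    apply tsum_congr; intro x; ring
  have ha : φ * ∑' x, |qhat x - qstar x| ≤ 2 * (b + A) := by
    calc φ * ∑' x, |qhat x - qstar x| ≤ |∑' x, (qhat x - qstar x) * T x| := hsepT
      _ = |((∑' x, qhat x * T x) - phat T) - ((∑' x, qstar x * T x) - phat T)| := by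
          rw [heq]; ring_nf
      _ ≤ |(∑' x, qhat x * T x) - phat T| + |(∑' x, qstar x * T x) - phat T| :=
          abs_sub _ _
      _ ≤ 2 * (b + A) := by linarith
  have s1 : Summable (fun x => |qhat x - p x|) := (hqhs.sub hps).abs
  have s2 : Summable (fun x => |qhat x - qstar x|) := (hqhs.sub hqss).abs
  have s3 : Summable (fun x => |qstar x - p x|) := (hqss.sub hps).abs
  have htri : ∑' x, |qhat x - p x| ≤ (∑' x, |qhat x - qstar x|) + b := by
    calc ∑' x, |qhat x - p x| ≤ ∑' x, (|qhat x - qstar x| + |qstar x - p x|) :=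
        Summable.tsum_le_tsum (fun x => abs_sub_le _ _ _) s1 (s2.add s3)
      _ = _ := Summable.tsum_add s2 s3
  have ha2 : ∑' x, |qhat x - qstar x| ≤ 2 / φ * (b + A) := by
    rw [div_mul_eq_mul_div, le_div_iff₀ hφ]; linarith
  have hfin : (1 + 2/φ) * b + (2/φ) * A = b + (2/φ) * (b + A) := by ring
  linarith
end

section
/- Let q1, q2, q3 be probability distributions with δ_{ij} := q_i − q_j. If ‖δ_{12}‖₁ ≤ ‖δ_{13}‖₁/2 and ‖δ_{12}‖₁ ≤ ‖δ_{23}‖₁/2, then |⟨δ_{13}, S_{23}⟩| ≥ ‖δ_{13}‖₁/4 and |⟨δ_{23}, S_{13}⟩| ≥ ‖δ_{23}‖₁/4, where S_{ij} is the signed Scheffé set of the pair (q_i, q_j). -/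
private lemma stmt3_aux {X : Type*} (p q r : X → ℝ)
    (sp : Summable p) (sq : Summable q) (sr : Summable r)
    (h : ∑' x, |p x - q x| ≤ (∑' x, |q x - r x|) / 2) :
    (∑' x, |p x - r x|) / 4 ≤
        |∑' x, (p x - r x) * (if r x ≤ q x then (1 : ℝ) else -1)| := by
  set S : X → ℝ := fun x => if r x ≤ q x then (1 : ℝ) else -1 with hSdef
  have hSabs : ∀ x, |S x| = 1 := by
    intro x
    by_cases h' : r x ≤ q x <;> simp [S, h']
  have spq : Summable (fun x => |p x - q x|) := (sp.sub sq).abs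
  have sqr : Summable (fun x => |q x - r x|) := (sq.sub sr).abs
  have spr : Summable (fun x => |p x - r x|) := (sp.sub sr).abs
  have hqr : ∀ x, (q x - r x) * S x = |q x - r x| := by
    intro x
    by_cases h' : r x ≤ q x
    · simp [S, h', abs_of_nonneg (sub_nonneg.mpr h')]
    · push_neg at h'
      simp [S, h', abs_of_neg (sub_neg.mpr h')]
  have sum_pqS : Summable (fun x => (p x - q x) * S x) := by
    rw [← summable_abs_iff]
    have : (fun x => |(p x - q x) * S x|) = fun x => |p x - q x| :=
      funext fun x => by rw [abs_mul, hSabs, mul_one]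
    rw [this]; exact spq
  have sum_qrS : Summable (fun x => (q x - r x) * S x) := by
    simp_rw [hqr]; exact sqr
  have hsplit : ∑' x, (p x - r x) * S x
      = (∑' x, (p x - q x) * S x) + ∑' x, |q x - r x| := by
    rw [← Summable.tsum_add sum_pqS sqr]
    refine tsum_congr fun x => ?_
    rw [← hqr x]; ring
  have hE : |∑' x, (p x - q x) * S x| ≤ ∑' x, |p x - q x| := by
    have := norm_tsum_le_tsum_norm (f := fun x => (p x - q x) * S x) ?_
    · simpa [Real.norm_eq_abs, abs_mul, hSabs] using this
    · simp only [Real.norm_eq_abs]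
      have : (fun x => |(p x - q x) * S x|) = fun x => |p x - q x| :=
        funext fun x => by rw [abs_mul, hSabs, mul_one]
      rw [this]; exact spq
  have hBC : ∑' x, |p x - r x| ≤ (∑' x, |p x - q x|) + ∑' x, |q x - r x| := by
    rw [← Summable.tsum_add spq sqr]
    exact Summable.tsum_le_tsum (fun x => abs_sub_le (p x) (q x) (r x)) spr (spq.add sqr)
  have hCnn : (0:ℝ) ≤ ∑' x, |q x - r x| := tsum_nonneg fun x => abs_nonneg _
  have hT := le_abs_self (∑' x, (p x - r x) * S x)
  have hE' := neg_abs_le (∑' x, (p x - q x) * S x)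
  show (∑' x, |p x - r x|) / 4 ≤ |∑' x, (p x - r x) * S x|
  linarith
/-- If `‖δ₁₂‖₁ ≤ ‖δ₁₃‖₁/2` and `‖δ₁₂‖₁ ≤ ‖δ₂₃‖₁/2`, then
`|⟨δ₁₃, S₂₃⟩| ≥ ‖δ₁₃‖₁/4` and `|⟨δ₂₃, S₁₃⟩| ≥ ‖δ₂₃‖₁/4`, where `S_{ij}` is
the signed Scheffé set of `(q_i, q_j)` (equal to `+1` on ties). -/
theorem stmt_3 {X : Type*} [Countable X] (q1 q2 q3 : X → ℝ)
    (hq1 : (∀ x, 0 ≤ q1 x) ∧ HasSum q1 1)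
    (hq2 : (∀ x, 0 ≤ q2 x) ∧ HasSum q2 1)
    (hq3 : (∀ x, 0 ≤ q3 x) ∧ HasSum q3 1)
    (h13 : ∑' x, |q1 x - q2 x| ≤ (∑' x, |q1 x - q3 x|) / 2)
    (h23 : ∑' x, |q1 x - q2 x| ≤ (∑' x, |q2 x - q3 x|) / 2) :
    (∑' x, |q1 x - q3 x|) / 4 ≤
        |∑' x, (q1 x - q3 x) * (if q3 x ≤ q2 x then (1 : ℝ) else -1)| ∧
    (∑' x, |q2 x - q3 x|) / 4 ≤
        |∑' x, (q2 x - q3 x) * (if q3 x ≤ q1 x then (1 : ℝ) else -1)| := by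
  have s1 := hq1.2.summable
  have s2 := hq2.2.summable
  have s3 := hq3.2.summable
  constructor
  · exact stmt3_aux q1 q2 q3 s1 s2 s3 h23
  · refine stmt3_aux q2 q1 q3 s2 s1 s3 ?_
    simpa [abs_sub_comm (q2 _) (q1 _)] using h13
end

section
/- Let q1, q2, q3 be probability distributions with δ_{ij} := q_i − q_j. If ‖δ_{12}‖₁ > ‖δ_{13}‖₁/3 and ‖δ_{12}‖₁ > ‖δ_{23}‖₁/3, then either |⟨δ_{13}, S_{12}⟩| > ‖δ_{13}‖₁/6 or |⟨δ_{23}, S_{12}⟩| > ‖δ_{23}‖₁/6, where S_{12} is the signed Scheffé set of the pair (q_1, q_2). -/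
/-- If `‖δ₁₂‖₁ > ‖δ₁₃‖₁/3` and `‖δ₁₂‖₁ > ‖δ₂₃‖₁/3`, then either
`|⟨δ₁₃, S₁₂⟩| > ‖δ₁₃‖₁/6` or `|⟨δ₂₃, S₁₂⟩| > ‖δ₂₃‖₁/6`, where `S₁₂` is the
signed Scheffé set of `(q₁, q₂)` (equal to `+1` on ties). -/
theorem stmt_4 {X : Type*} [Countable X] (q1 q2 q3 : X → ℝ)
    (hq1 : (∀ x, 0 ≤ q1 x) ∧ HasSum q1 1)
    (hq2 : (∀ x, 0 ≤ q2 x) ∧ HasSum q2 1)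
    (hq3 : (∀ x, 0 ≤ q3 x) ∧ HasSum q3 1)
    (h13 : (∑' x, |q1 x - q3 x|) / 3 < ∑' x, |q1 x - q2 x|)
    (h23 : (∑' x, |q2 x - q3 x|) / 3 < ∑' x, |q1 x - q2 x|) :
    (∑' x, |q1 x - q3 x|) / 6 <
        |∑' x, (q1 x - q3 x) * (if q2 x ≤ q1 x then (1 : ℝ) else -1)| ∨
    (∑' x, |q2 x - q3 x|) / 6 <
        |∑' x, (q2 x - q3 x) * (if q2 x ≤ q1 x then (1 : ℝ) else -1)| := by
  by_contra hc
  push_neg at hc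
  obtain ⟨hA, hB⟩ := hc
  set s : X → ℝ := fun x => if q2 x ≤ q1 x then (1 : ℝ) else -1 with hs
  have s1 : Summable q1 := hq1.2.summable
  have s2 : Summable q2 := hq2.2.summable
  have s3 : Summable q3 := hq3.2.summable
  have habs : ∀ x, |s x| = 1 := by
    intro x; by_cases h : q2 x ≤ q1 x <;> simp [hs, h]
  have sumprod : ∀ f : X → ℝ, Summable f → Summable (fun x => f x * s x) := by
    intro f hf
    rw [← summable_abs_iff]
    have : (fun x => |f x * s x|) = fun x => |f x| := by
      funext x; rw [abs_mul, habs, mul_one]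
    rw [this]
    exact hf.abs
  have d12 : Summable (fun x => q1 x - q2 x) := s1.sub s2
  have d13 : Summable (fun x => q1 x - q3 x) := s1.sub s3
  have d23 : Summable (fun x => q2 x - q3 x) := s2.sub s3
  have key12 : (∑' x, (q1 x - q2 x) * s x) = ∑' x, |q1 x - q2 x| := by
    apply tsum_congr
    intro x
    by_cases h : q2 x ≤ q1 x
    · simp [hs, h, abs_of_nonneg (sub_nonneg.mpr h)]
    · push_neg at h
      simp [hs, not_le.mpr h, abs_of_neg (sub_neg.mpr h)]
  have split : (∑' x, (q1 x - q3 x) * s x) - (∑' x, (q2 x - q3 x) * s x)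
      = ∑' x, (q1 x - q2 x) * s x := by
    rw [← Summable.tsum_sub (sumprod _ d13) (sumprod _ d23)]
    apply tsum_congr
    intro x; ring
  have n13 : 0 ≤ ∑' x, |q1 x - q3 x| := tsum_nonneg fun x => abs_nonneg _
  have n23 : 0 ≤ ∑' x, |q2 x - q3 x| := tsum_nonneg fun x => abs_nonneg _
  have l1 : (∑' x, (q1 x - q3 x) * s x) ≤ |∑' x, (q1 x - q3 x) * s x| := le_abs_self _
  have l2 : -(∑' x, (q2 x - q3 x) * s x) ≤ |∑' x, (q2 x - q3 x) * s x| := neg_le_abs _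
  rw [key12] at split
  linarith
end

section
/- For any probability distributions q1,...,qk on a countable domain, the 1/6-Scheffé graph has the following triangular substructure: for every triple {j, j', j''} of distinct indices, at least one of the following holds: (i) there are edges {j,j''} → {j',j''} and {j',j''} → {j,j''}; (ii) there is an edge {j,j'} → {j,j''}; (iii) there is an edge {j,j'} → {j',j''}. -/
lemma mul_sign_eq_abs (a b : ℝ) :
    (a - b) * (if b ≤ a then (1:ℝ) else -1) = |a - b| := by
  split_ifs with h
  · rw [mul_one, abs_of_nonneg (sub_nonneg.2 h)]
  · rw [abs_of_neg (sub_neg.2 (lt_of_not_ge h))]; ring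

lemma summable_mul_sign {X : Type*} {f s : X → ℝ} (hf : Summable f)
    (hs : ∀ x, |s x| = 1) : Summable fun x => f x * s x := by
  rw [← summable_abs_iff]
  have h : (fun x => |f x * s x|) = fun x => |f x| := by
    funext x; rw [abs_mul, hs, mul_one]
  rw [h, summable_abs_iff]; exact hf

lemma abs_tsum_mul_sign_le {X : Type*} {f s : X → ℝ} (hf : Summable f)
    (hs : ∀ x, |s x| = 1) : |∑' x, f x * s x| ≤ ∑' x, |f x| := by
  have h1 : Summable fun x => |f x * s x| := by
    have h : (fun x => |f x * s x|) = fun x => |f x| := by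
      funext x; rw [abs_mul, hs, mul_one]
    rw [h]; exact hf.abs
  calc |∑' x, f x * s x| ≤ ∑' x, |f x * s x| := by
        have h2 : Summable fun x => ‖f x * s x‖ := by
          simpa only [Real.norm_eq_abs] using h1
        simpa only [Real.norm_eq_abs] using norm_tsum_le_tsum_norm h2
    _ = ∑' x, |f x| := by
        apply tsum_congr; intro x; rw [abs_mul, hs, mul_one]



/-- There is an edge `{i, i'} → {a, b}` in the `φ`-Scheffé graph of the family `q` iff
`|⟨q_a - q_b, S_{i i'}⟩| ≥ φ ‖q_a - q_b‖₁`, where `S_{i i'} = sgn (q_i - q_{i'})`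
(equal to `+1` on ties). -/
def scheffeEdge {X : Type*} {k : ℕ} (φ : ℝ) (q : Fin k → X → ℝ)
    (i i' a b : Fin k) : Prop :=
  φ * ∑' x, |q a x - q b x| ≤
    |∑' x, (q a x - q b x) * (if q i' x ≤ q i x then (1 : ℝ) else -1)|

/-- Triangular substructure of the `1/6`-Scheffé graph: for any distinct `j, j', j''`,
either `{j,j''} ↔ {j',j''}`, or `{j,j'} → {j,j''}`, or `{j,j'} → {j',j''}`. -/
theorem stmt_5 {X : Type*} [Countable X] (k : ℕ) (q : Fin k → X → ℝ)
    (hq : ∀ j, (∀ x, 0 ≤ q j x) ∧ HasSum (q j) 1)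
    (j j' j'' : Fin k) (hjj' : j ≠ j') (hjj'' : j ≠ j'') (hj'j'' : j' ≠ j'') :
    (scheffeEdge (1/6) q j j'' j' j'' ∧ scheffeEdge (1/6) q j' j'' j j'') ∨
      scheffeEdge (1/6) q j j' j j'' ∨ scheffeEdge (1/6) q j j' j' j'' := by
  classical
  by_cases h2 : scheffeEdge (1/6) q j j' j j''
  · exact Or.inr (Or.inl h2)
  by_cases h3 : scheffeEdge (1/6) q j j' j' j''
  · exact Or.inr (Or.inr h3)
  left
  -- setup
  have hsum : ∀ a : Fin k, Summable (q a) := fun a => (hq a).2.summable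
  have hsub : ∀ a b : Fin k, Summable (fun x => q a x - q b x) :=
    fun a b => (hsum a).sub (hsum b)
  set S : Fin k → Fin k → X → ℝ :=
    fun c d x => if q d x ≤ q c x then (1:ℝ) else -1 with hS
  have hSone : ∀ c d x, |S c d x| = 1 := by
    intro c d x; simp only [hS]; split_ifs <;> simp
  set I : Fin k → Fin k → Fin k → Fin k → ℝ :=
    fun a b c d => ∑' x, (q a x - q b x) * S c d x with hI
  set N : Fin k → Fin k → ℝ := fun a b => ∑' x, |q a x - q b x| with hN
  have hE : ∀ c d a b : Fin k,
      scheffeEdge (1/6) q c d a b ↔ (1/6) * N a b ≤ |I a b c d| := by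
    intro c d a b; rfl
  have hIN : ∀ a b : Fin k, I a b a b = N a b := by
    intro a b
    exact tsum_congr fun x => mul_sign_eq_abs (q a x) (q b x)
  have hbound : ∀ a b c d : Fin k, |I a b c d| ≤ N a b :=
    fun a b c d => abs_tsum_mul_sign_le (hsub a b) (hSone c d)
  have hsplit : ∀ c d : Fin k, I j j'' c d = I j j' c d + I j' j'' c d := by
    intro c d
    rw [hI]
    have : (fun x => (q j x - q j'' x) * S c d x) =
        fun x => (q j x - q j' x) * S c d x + (q j' x - q j'' x) * S c d x := by
      funext x; ring
    simp only [this]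
    exact Summable.tsum_add (summable_mul_sign (hsub j j') (hSone c d))
      (summable_mul_sign (hsub j' j'') (hSone c d))
  have htri : ∀ a b c : Fin k, N a c ≤ N a b + N b c := by
    intro a b c
    rw [hN]
    calc (∑' x, |q a x - q c x|) ≤ ∑' x, (|q a x - q b x| + |q b x - q c x|) := by
          apply Summable.tsum_le_tsum _ (hsub a c).abs ((hsub a b).abs.add (hsub b c).abs)
          intro x
          have := abs_sub_le (q a x) (q b x) (q c x); linarith
      _ = (∑' x, |q a x - q b x|) + ∑' x, |q b x - q c x| :=
          Summable.tsum_add (hsub a b).abs (hsub b c).abs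
  have hNnn : ∀ a b : Fin k, 0 ≤ N a b :=
    fun a b => tsum_nonneg fun x => abs_nonneg _
  -- notation: U = N j j', V = N j j'', W = N j' j''
  rw [hE, not_le] at h2 h3
  -- U < (V+W)/6
  have hU : N j j' = I j j'' j j' - I j' j'' j j' := by
    rw [← hIN j j', hsplit j j']; ring
  have hUlt : N j j' < (1/6) * N j j'' + (1/6) * N j' j'' := by
    rw [hU]
    have := abs_sub (I j j'' j j') (I j' j'' j j')
    calc I j j'' j j' - I j' j'' j j' ≤ |I j j'' j j'| + |I j' j'' j j'| := by
          have := le_abs_self (I j j'' j j'); have := neg_abs_le (I j' j'' j j'); linarith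
      _ < (1/6) * N j j'' + (1/6) * N j' j'' := by linarith
  have htvw : N j j'' ≤ N j j' + N j' j'' := htri j j' j''
  have hsym : N j' j = N j j' := by
    rw [hN]; exact tsum_congr fun x => abs_sub_comm _ _
  have htwv : N j' j'' ≤ N j j' + N j j'' := by
    have := htri j' j j''; linarith [hsym]
  constructor
  · -- edge {j,j''} → {j',j''} : (1/6) * W ≤ |I j' j'' j j''|
    rw [hE]
    have hid : I j' j'' j j'' = N j j'' - I j j' j j'' := by
      have := hsplit j j''; rw [hIN j j''] at this; linarith
    have hle : N j j'' - N j j' ≤ I j' j'' j j'' := by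
      rw [hid]
      have h := (abs_le.1 (le_of_eq rfl : |I j j' j j''| ≤ |I j j' j j''|)).2
      have := le_abs_self (I j j' j j''); have hb := hbound j j' j j''; linarith
    have : (1/6) * N j' j'' ≤ N j j'' - N j j' := by
      have := hNnn j j''; linarith
    calc (1/6) * N j' j'' ≤ I j' j'' j j'' := le_trans this hle
      _ ≤ |I j' j'' j j''| := le_abs_self _
  · -- edge {j',j''} → {j,j''} : (1/6) * V ≤ |I j j'' j' j''|
    rw [hE]
    have hid : I j j'' j' j'' = I j j' j' j'' + N j' j'' := by
      have := hsplit j' j''; rw [hIN j' j''] at this; linarith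
    have hle : N j' j'' - N j j' ≤ I j j'' j' j'' := by
      rw [hid]
      have := le_abs_self (-(I j j' j' j''))
      have hb := hbound j j' j' j''
      have := neg_abs_le (I j j' j' j''); linarith
    have : (1/6) * N j j'' ≤ N j' j'' - N j j' := by
      have := hNnn j' j''; linarith
    calc (1/6) * N j j'' ≤ I j j'' j' j'' := le_trans this hle
      _ ≤ |I j j'' j' j''| := le_abs_self _
end

section
/- Let G be a directed graph on the vertex set V = {pairs {i,j} ⊆ [k]} satisfying the triangular substructure property: for every triple of distinct indices j, j', j'', either {j,j''} ↔ {j',j''} (both directions), or {j,j'} → {j,j''}, or {j,j'} → {j',j''}. Then for any r ≥ 1, the number of vertices of G with in-degree less than r is at most 3kr. -/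
/-!
Fix an index `a` and let `B` be the set of `b` for which `{a, b}` has in-degree `< r`. For
`b, c ∈ B` the triangular property gives: either `{a, c}` and `{b, c}` are joined in both
directions, or one of them points to `{a, b}`. Hence every `b ∈ B` is doubly joined in this way
with all but fewer than `r` of the `c ∈ B` (the others give distinct in-neighbours of `{a, b}`),
while every `c ∈ B` is doubly joined with fewer than `r` of the `b` (each gives the in-neighbour
`{b, c}` of `{a, c}`). Double counting yields `|B| ≤ 2r + 1`, and summing over `a` counts each
vertex of in-degree `< r` twice, so there are at most `k (2r + 1) / 2 ≤ 3kr` of them.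
-/

open Finset

theorem Finset.card_le_two_mul_add_one_of_card_filter_le {ι : Type*} [DecidableEq ι]
    (B : Finset ι) (D : ι → ι → Prop) [DecidableRel D] {r : ℝ} (hr : 0 ≤ r)
    (hrow : ∀ b ∈ B, (#{c ∈ B.erase b | ¬D b c} : ℝ) ≤ r)
    (hcol : ∀ c ∈ B, (#{b ∈ B | D b c} : ℝ) ≤ r) :
    (#B : ℝ) ≤ 2 * r + 1 := by
  rcases B.eq_empty_or_nonempty with rfl | hB
  · simp only [card_empty, CharP.cast_eq_zero]; linarith
  have hrow' : ∀ b ∈ B, (#B : ℝ) - 1 ≤ #{c ∈ B | D b c} + r := by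
    intro b hb
    have hcount : #{c ∈ B.erase b | D b c} + #{c ∈ B.erase b | ¬D b c} + 1 = #B := by
      rw [card_filter_add_card_filter_not, card_erase_add_one hb]
    have hsub : #{c ∈ B.erase b | D b c} ≤ #{c ∈ B | D b c} :=
      card_le_card (filter_subset_filter _ (erase_subset b B))
    have hcount' : (#{c ∈ B.erase b | D b c} : ℝ) + #{c ∈ B.erase b | ¬D b c} + 1 = #B := by
      exact_mod_cast hcount
    have hsub' : (#{c ∈ B.erase b | D b c} : ℝ) ≤ #{c ∈ B | D b c} := by exact_mod_cast hsub
    linarith [hrow b hb]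
  have hdouble : ∑ b ∈ B, (#{c ∈ B | D b c} : ℝ) = ∑ c ∈ B, (#{b ∈ B | D b c} : ℝ) := by
    exact_mod_cast sum_card_bipartiteAbove_eq_sum_card_bipartiteBelow (s := B) (t := B) (r := D)
  have hprod : (#B : ℝ) * (#B - 1) ≤ #B * (2 * r) := by
    calc (#B : ℝ) * (#B - 1) = ∑ _b ∈ B, ((#B : ℝ) - 1) := by rw [sum_const, nsmul_eq_mul]
      _ ≤ ∑ b ∈ B, ((#{c ∈ B | D b c} : ℝ) + r) := sum_le_sum hrow'
      _ = ∑ c ∈ B, (#{b ∈ B | D b c} : ℝ) + #B * r := by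
        rw [sum_add_distrib, hdouble, sum_const, nsmul_eq_mul]
      _ ≤ ∑ _c ∈ B, r + #B * r := by gcongr with c hc; exact hcol c hc
      _ = #B * (2 * r) := by rw [sum_const, nsmul_eq_mul]; ring
  have hBpos : (0 : ℝ) < #B := by exact_mod_cast card_pos.mpr hB
  linarith [le_of_mul_le_mul_left hprod hBpos]

namespace PairDigraph

variable {α : Type*} [DecidableEq α]

def IsTriangular (E : Finset α → Finset α → Prop) : Prop :=
  ∀ a b c : α, a ≠ b → a ≠ c → b ≠ c →
    (E {a, c} {b, c} ∧ E {b, c} {a, c}) ∨ E {a, b} {a, c} ∨ E {a, b} {b, c}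

theorem IsTriangular.inEdge_or_doubleEdge {E : Finset α → Finset α → Prop} (hE : IsTriangular E)
    {a b c : α} (hab : a ≠ b) (hca : c ≠ a) (hcb : c ≠ b) :
    E {a, c} {a, b} ∨ E {b, c} {a, b} ∨ (E {a, c} {b, c} ∧ E {b, c} {a, c}) := by
  have h₁ := hE a c b hca.symm hab hcb
  have h₂ := hE b c a hcb.symm hab.symm hca
  rw [pair_comm c b] at h₁
  rw [pair_comm b a, pair_comm c a] at h₂
  tauto

variable [Fintype α]

variable (α) in
def vertices : Finset (Finset α) := {s | #s = 2}

theorem pair_mem_vertices {a b : α} : {a, b} ∈ vertices α ↔ a ≠ b := by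
  simp [vertices, card_pair_eq_two_iff]

variable (E : Finset α → Finset α → Prop) [DecidableRel E]

def inDegree (v : Finset α) : ℕ := #{u ∈ vertices α | E u v}

noncomputable def lowVertices (r : ℝ) : Finset (Finset α) :=
  {v ∈ vertices α | (inDegree E v : ℝ) < r}

noncomputable def lowNeighbors (r : ℝ) (a : α) : Finset α := {b | {a, b} ∈ lowVertices E r}

variable {E}

theorem card_filter_edge_le_inDegree (c : α) (v : Finset α) :
    #{b | b ≠ c ∧ E {b, c} v} ≤ inDegree E v := by
  refine card_le_card_of_injOn (fun b => {b, c}) ?_ ?_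
  · intro b hb
    simp only [coe_filter, mem_univ, true_and, Set.mem_ofPred_eq] at hb
    simp [pair_mem_vertices, hb.1, hb.2]
  · intro b hb b' _ h
    simp only [coe_filter, mem_univ, true_and, Set.mem_ofPred_eq] at hb h
    have hmem : b ∈ ({b', c} : Finset α) := h ▸ mem_insert_self b {c}
    simpa [hb.1] using hmem

theorem card_filter_edge_or_edge_le_inDegree (a b : α) (v : Finset α) :
    #{c | c ≠ a ∧ c ≠ b ∧ (E {a, c} v ∨ E {b, c} v)} ≤ inDegree E v := by
  refine card_le_card_of_injOn (fun c => if E {a, c} v then {a, c} else {b, c}) ?_ ?_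
  · intro c hc
    simp only [coe_filter, mem_univ, true_and, Set.mem_ofPred_eq] at hc
    simp only [coe_filter, Set.mem_ofPred_eq]
    split_ifs with hac
    · simp [pair_mem_vertices, hc.1.symm, hac]
    · simp [pair_mem_vertices, hc.2.1.symm, hc.2.2.resolve_left hac]
  · intro c hc c' _ h
    simp only [coe_filter, mem_univ, true_and, Set.mem_ofPred_eq] at hc h
    have hmem : c ∈ (if E {a, c} v then {a, c} else {b, c} : Finset α) := by
      split_ifs <;> simp
    rw [h] at hmem
    split_ifs at hmem <;> simpa [hc.1, hc.2.1] using hmem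

variable {r : ℝ}

theorem mem_lowNeighbors {a b : α} :
    b ∈ lowNeighbors E r a ↔ a ≠ b ∧ (inDegree E {a, b} : ℝ) < r := by
  simp [lowNeighbors, lowVertices, pair_mem_vertices]

theorem card_lowNeighbors_le (hE : IsTriangular E) (hr : 0 ≤ r) (a : α) :
    (#(lowNeighbors E r a) : ℝ) ≤ 2 * r + 1 := by
  set B := lowNeighbors E r a
  refine card_le_two_mul_add_one_of_card_filter_le B
    (fun b c => b ≠ c ∧ E {a, c} {b, c} ∧ E {b, c} {a, c}) hr (fun b hb => ?_) (fun c hc => ?_)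
  · obtain ⟨hab, hlow⟩ := mem_lowNeighbors.mp hb
    refine le_trans ?_ hlow.le
    refine (Nat.cast_le.mpr (card_le_card fun c hc => ?_)).trans
      (Nat.cast_le.mpr (card_filter_edge_or_edge_le_inDegree a b {a, b}))
    obtain ⟨hcB, hnD⟩ := mem_filter.mp hc
    obtain ⟨hcb, hcB⟩ := mem_erase.mp hcB
    have hca : c ≠ a := ((mem_lowNeighbors.mp hcB).1).symm
    have hnd : ¬(E {a, c} {b, c} ∧ E {b, c} {a, c}) := fun hd => hnD ⟨hcb.symm, hd⟩
    simpa [hca, hcb, hnd] using hE.inEdge_or_doubleEdge hab hca hcb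
  · obtain ⟨hac, hlow⟩ := mem_lowNeighbors.mp hc
    refine le_trans ?_ hlow.le
    refine (Nat.cast_le.mpr (card_le_card fun b hb => ?_)).trans
      (Nat.cast_le.mpr (card_filter_edge_le_inDegree c {a, c}))
    obtain ⟨-, hbc, -, hedge⟩ := mem_filter.mp hb
    simp [hbc, hedge]

theorem sum_card_lowNeighbors :
    ∑ a, #(lowNeighbors E r a) = 2 * #(lowVertices E r) := by
  have hfiber : ∀ a, #(lowNeighbors E r a) = #{v ∈ lowVertices E r | a ∈ v} := by
    intro a
    refine card_bij (fun b _ => {a, b}) (fun b hb => ?_) (fun b hb b' _ h => ?_) (fun v hv => ?_)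
    · simpa [lowNeighbors] using hb
    · have hab := (mem_lowNeighbors.mp hb).1
      have hb : b ∈ ({a, b'} : Finset α) := h ▸ mem_insert_of_mem (mem_singleton_self b)
      simpa [hab.symm] using hb
    · obtain ⟨hvlow, hav⟩ := mem_filter.mp hv
      have hv2 : #v = 2 := (mem_filter.mp (mem_filter.mp hvlow).1).2
      obtain ⟨b, hb⟩ := card_eq_one.mp (by rw [card_erase_of_mem hav, hv2] : #(v.erase a) = 1)
      have hvab : {a, b} = v := by rw [← hb, insert_erase hav]
      exact ⟨b, by simpa [lowNeighbors, hvab] using hvlow, hvab⟩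
  calc ∑ a, #(lowNeighbors E r a) = ∑ a, #{v ∈ lowVertices E r | a ∈ v} :=
        sum_congr rfl fun a _ => hfiber a
    _ = ∑ v ∈ lowVertices E r, #{a | a ∈ v} :=
        (sum_card_bipartiteAbove_eq_sum_card_bipartiteBelow (r := fun v a => a ∈ v)).symm
    _ = ∑ _v ∈ lowVertices E r, 2 := sum_congr rfl fun v hv => by
        rw [filter_mem_eq_of_subset (subset_univ v)]
        exact (mem_filter.mp (mem_filter.mp hv).1).2
    _ = 2 * #(lowVertices E r) := by rw [sum_const, smul_eq_mul, mul_comm]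

theorem card_lowVertices_le (hE : IsTriangular E) (hr : 0 ≤ r) :
    2 * (#(lowVertices E r) : ℝ) ≤ Fintype.card α * (2 * r + 1) := by
  calc 2 * (#(lowVertices E r) : ℝ) = ∑ a, (#(lowNeighbors E r a) : ℝ) := by
        exact_mod_cast (sum_card_lowNeighbors (E := E) (r := r)).symm
    _ ≤ ∑ _a : α, (2 * r + 1) := sum_le_sum fun a _ => card_lowNeighbors_le hE hr a
    _ = Fintype.card α * (2 * r + 1) := by rw [sum_const, nsmul_eq_mul, card_univ]

end PairDigraph

open Classical in
/-- If a digraph on the 2-element subsets of `[k]` has the triangular substructure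
property, then for every real `r ≥ 1` there are at most `3 k r` vertices of
in-degree less than `r`. -/
theorem stmt_6 (k : ℕ) (E : Finset (Fin k) → Finset (Fin k) → Prop)
    (htri : ∀ a b c : Fin k, a ≠ b → a ≠ c → b ≠ c →
      (E {a, c} {b, c} ∧ E {b, c} {a, c}) ∨ E {a, b} {a, c} ∨ E {a, b} {b, c})
    (r : ℝ) (hr : 1 ≤ r) :
    (((Finset.univ.filter (fun s : Finset (Fin k) => s.card = 2)).filter
        (fun v =>
          ((((Finset.univ.filter (fun s : Finset (Fin k) => s.card = 2)).filter
            (fun u => E u v)).card : ℝ) < r))).card : ℝ) ≤ 3 * k * r := by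
  have h := PairDigraph.card_lowVertices_le htri (r := r) (by linarith)
  rw [Fintype.card_fin] at h
  change (#(PairDigraph.lowVertices E r) : ℝ) ≤ _
  nlinarith
end

section
/- Let G be a directed graph on vertex set V = {2-element subsets of [k]}, k ≥ 2, satisfying the triangular substructure property (for every triple {j,j',j''}: either {j,j''} ↔ {j',j''}, or {j,j'} → {j,j''}, or {j,j'} → {j',j''}). Then G has a dominating set of size at most 4·k^{3/2}·√(log k) (for k sufficiently large). -/
/-!
Call `b` a witness for the ordered pair `(a, c)` if `{a, b}` or `{b, c}` dominates `{a, c}`.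
If `b` is not a witness for `(a, c)`, the triangle `{a, b, c}` makes `c` a witness for `(a, b)`.
So, for fixed `a`, "not a witness" is an antisymmetric relation on the set of those `c` for which
`(a, c)` has at most `t` witnesses, and in it every such `c` relates to all but `t + 1` others;
hence there are at most `2t + 1` of them, and these poorly witnessed pairs, at most `(2t + 1) k`
in total, are put into `D`. Every other pair has more than `t` witnesses, and for
`t = ⌈√(k ln k)⌉` a greedy set `S` of `2t + 1` vertices meets all these witness sets; the pairs
meeting `S` then dominate the rest.
-/

open Finset Real

section HittingSet

variable {α ι : Type*} [Fintype α] [DecidableEq α]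

theorem sum_card_filter_mem_eq_sum_card (I : Finset ι) (F : ι → Finset α) :
    ∑ x : α, #{i ∈ I | x ∈ F i} = ∑ i ∈ I, #(F i) := by
  have := sum_card_bipartiteAbove_eq_sum_card_bipartiteBelow (fun i x => x ∈ F i) (s := I)
    (t := univ)
  simp_all [bipartiteAbove, bipartiteBelow]

theorem exists_mul_card_le_card_mul_card_filter_mem [Nonempty α] (I : Finset ι)
    (F : ι → Finset α) (r : ℕ) (hF : ∀ i ∈ I, r ≤ #(F i)) :
    ∃ x : α, r * #I ≤ Fintype.card α * #{i ∈ I | x ∈ F i} := by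
  have hsum : ∑ _x : α, r * #I ≤ ∑ x : α, Fintype.card α * #{i ∈ I | x ∈ F i} := by
    rw [sum_const, card_univ, smul_eq_mul, ← mul_sum, sum_card_filter_mem_eq_sum_card]
    exact Nat.mul_le_mul_left _ (by simpa [mul_comm] using card_nsmul_le_sum I _ r hF)
  obtain ⟨x, -, hx⟩ := exists_le_of_sum_le univ_nonempty hsum
  exact ⟨x, hx⟩

/-- Greedy: each new element lies in at least an `r / n` fraction of the sets still missed. -/
theorem exists_card_le_card_filter_disjoint_mul_pow_le [Nonempty α] (F : ι → Finset α) (r : ℕ)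
    (s : ℕ) (I : Finset ι) (hF : ∀ i ∈ I, r ≤ #(F i)) :
    ∃ S : Finset α, #S ≤ s ∧
      #{i ∈ I | Disjoint S (F i)} * Fintype.card α ^ s ≤ #I * (Fintype.card α - r) ^ s := by
  set n := Fintype.card α
  induction s generalizing I with
  | zero => exact ⟨∅, le_rfl, by simp⟩
  | succ s ih =>
    obtain ⟨x, hx⟩ : ∃ x, r * #I ≤ n * #{i ∈ I | x ∈ F i} :=
      exists_mul_card_le_card_mul_card_filter_mem I F r hF
    set I' := {i ∈ I | x ∉ F i}
    have hI' : n * #I' ≤ (n - r) * #I := by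
      have hsplit : #{i ∈ I | x ∈ F i} + #I' = #I := card_filter_add_card_filter_not _
      have : n * #I' + n * #{i ∈ I | x ∈ F i} = n * #I := by rw [← mul_add, add_comm, hsplit]
      rw [Nat.sub_mul]
      omega
    obtain ⟨S, hS, hSI'⟩ := ih I' fun i hi => hF i (mem_of_mem_filter i hi)
    refine ⟨insert x S, (card_insert_le x S).trans (by omega), ?_⟩
    have hfilter : {i ∈ I | Disjoint (insert x S) (F i)} = {i ∈ I' | Disjoint S (F i)} := by
      simp only [disjoint_insert_left, I', filter_filter]
    calc #{i ∈ I | Disjoint (insert x S) (F i)} * n ^ (s + 1)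
        = #{i ∈ I' | Disjoint S (F i)} * n ^ s * n := by rw [hfilter, pow_succ, mul_assoc]
      _ ≤ #I' * (n - r) ^ s * n := Nat.mul_le_mul_right n hSI'
      _ = n * #I' * (n - r) ^ s := by ring
      _ ≤ (n - r) * #I * (n - r) ^ s := Nat.mul_le_mul_right _ hI'
      _ = #I * (n - r) ^ (s + 1) := by ring

theorem exists_card_le_forall_not_disjoint [Nonempty α] (F : ι → Finset α) {r s : ℕ}
    (I : Finset ι) (hF : ∀ i ∈ I, r ≤ #(F i))
    (hI : #I * (Fintype.card α - r) ^ s < Fintype.card α ^ s) :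
    ∃ S : Finset α, #S ≤ s ∧ ∀ i ∈ I, ¬Disjoint S (F i) := by
  obtain ⟨S, hS, hmiss⟩ := exists_card_le_card_filter_disjoint_mul_pow_le F r s I hF
  refine ⟨S, hS, fun i hi hdisj => ?_⟩
  have : 0 < #{i ∈ I | Disjoint S (F i)} := card_pos.mpr ⟨i, mem_filter.mpr ⟨hi, hdisj⟩⟩
  have := Nat.mul_le_mul_right (Fintype.card α ^ s) this
  omega

end HittingSet

theorem card_add_card_filter_swap_add_one_le {α : Type*} [DecidableEq α] (R : α → α → Prop)
    [DecidableRel R] {Q : Finset α} (hR : ∀ x ∈ Q, ∀ y ∈ Q, R x y → ¬R y x) {x : α} (hx : x ∈ Q) :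
    #{y ∈ Q | R x y} + #{y ∈ Q | R y x} + 1 ≤ #Q := by
  have hdisj : Disjoint {y ∈ Q | R x y} {y ∈ Q | R y x} :=
    disjoint_filter.mpr fun y hy hxy => hR x hx y hy hxy
  have hsub : {y ∈ Q | R x y} ∪ {y ∈ Q | R y x} ⊆ Q.erase x := by
    intro y hy
    simp only [mem_union, mem_filter] at hy
    refine mem_erase.mpr ⟨?_, ?_⟩
    · rintro rfl
      rcases hy with ⟨_, h⟩ | ⟨_, h⟩ <;> exact hR y hx y hx h h
    · rcases hy with ⟨h, _⟩ | ⟨h, _⟩ <;> exact h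
  have := card_le_card hsub
  rw [card_union_of_disjoint hdisj, card_erase_of_mem hx] at this
  have := card_pos.mpr ⟨x, hx⟩
  omega

theorem card_le_two_mul_add_one_of_antisymm {α : Type*} [DecidableEq α] (R : α → α → Prop)
    [DecidableRel R] {Q : Finset α} (m : ℕ) (hR : ∀ x ∈ Q, ∀ y ∈ Q, R x y → ¬R y x)
    (hQ : ∀ x ∈ Q, #Q ≤ #{y ∈ Q | R x y} + m + 1) : #Q ≤ 2 * m + 1 := by
  set out := ∑ x ∈ Q, #{y ∈ Q | R x y}
  have hin : ∑ x ∈ Q, #{y ∈ Q | R y x} = out :=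
    (sum_card_bipartiteAbove_eq_sum_card_bipartiteBelow R (s := Q) (t := Q)).symm
  have hlow : #Q * #Q ≤ out + #Q * (m + 1) := by
    simpa [sum_add_distrib, mul_comm, add_assoc] using sum_le_sum hQ
  have hup : 2 * out + #Q ≤ #Q * #Q := by
    simpa [sum_add_distrib, hin, two_mul, mul_comm] using
      sum_le_sum fun x hx => card_add_card_filter_swap_add_one_le R hR hx
  nlinarith

theorem sq_mul_sub_pow_lt_pow {n t s : ℕ} (hn : 0 < n) (htn : t ≤ n)
    (h : 2 * n * log n < t * s) : n ^ 2 * (n - t) ^ s < n ^ s := by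
  have hn' : (0 : ℝ) < n := by exact_mod_cast hn
  have hsub : ((n - t : ℕ) : ℝ) ≤ n * exp (-(t / n)) := by
    have := one_sub_le_exp_neg ((t : ℝ) / n)
    rw [Nat.cast_sub htn]
    calc (n : ℝ) - t = n * (1 - t / n) := by field_simp
      _ ≤ n * exp (-(t / n)) := by gcongr
  have hexp : exp (-(t / n)) ^ s < ((n : ℝ) ^ 2)⁻¹ := by
    rw [← exp_nat_mul, ← exp_log (pow_pos hn' 2), ← exp_neg, exp_lt_exp, log_pow, mul_neg,
      neg_lt_neg_iff, mul_div_assoc', lt_div_iff₀ hn']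
    push_cast
    linarith
  have : ((n ^ 2 * (n - t) ^ s : ℕ) : ℝ) < (n ^ s : ℕ) := by
    calc ((n ^ 2 * (n - t) ^ s : ℕ) : ℝ) = (n : ℝ) ^ 2 * ((n - t : ℕ) : ℝ) ^ s := by
          push_cast; ring
      _ ≤ (n : ℝ) ^ 2 * ((n : ℝ) ^ s * exp (-(t / n)) ^ s) := by
        rw [← mul_pow]; gcongr
      _ < (n : ℝ) ^ 2 * ((n : ℝ) ^ s * ((n : ℝ) ^ 2)⁻¹) := by gcongr
      _ = (n ^ s : ℕ) := by push_cast; field_simp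
  exact_mod_cast this

theorem two_mul_lt_ceil_sqrt_mul {x : ℝ} (hx : 0 < x) :
    2 * x < ⌈√x⌉₊ * (2 * ⌈√x⌉₊ + 1 : ℕ) := by
  have hle : √x ≤ ⌈√x⌉₊ := Nat.le_ceil _
  have hpos : (0 : ℝ) < ⌈√x⌉₊ := hle.trans_lt' (sqrt_pos.mpr hx)
  have hsq : x ≤ (⌈√x⌉₊ : ℝ) ^ 2 := by
    calc x = √x ^ 2 := (sq_sqrt hx.le).symm
      _ ≤ _ := by gcongr
  push_cast
  nlinarith

theorem ceil_sqrt_mul_log_le (k : ℕ) : ⌈√(k * log k)⌉₊ ≤ k := by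
  rw [Nat.ceil_le]
  calc √(k * log k) ≤ √(k * k) := by
        gcongr
        exact log_le_self (Nat.cast_nonneg k)
    _ = k := sqrt_mul_self (Nat.cast_nonneg k)

theorem rpow_three_halves_mul_sqrt {x y : ℝ} (hx : 0 ≤ x) :
    x ^ ((3 : ℝ) / 2) * √y = x * √(x * y) := by
  rw [show (3 : ℝ) / 2 = 1 + 1 / 2 by norm_num, rpow_add' hx (by norm_num), rpow_one,
    ← sqrt_eq_rpow, sqrt_mul hx, mul_assoc]

theorem two_mul_two_mul_add_one_mul_le {k t : ℕ} (hk : 64 ≤ k)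
    (ht : (t : ℝ) < √(k * log k) + 1) :
    2 * (2 * t + 1) * (k : ℝ) ≤ 4 * (k : ℝ) ^ ((3 : ℝ) / 2) * √(logb 2 k) := by
  have hk' : (64 : ℝ) ≤ k := by exact_mod_cast hk
  have hlog : 4 ≤ log k := by
    calc (4 : ℝ) ≤ 6 * log 2 := by linarith [log_two_gt_d9]
      _ = log 64 := by rw [show (64 : ℝ) = 2 ^ 6 by norm_num, log_pow]; norm_num
      _ ≤ log k := log_le_log (by norm_num) hk'
  have hx : 16 ≤ √(k * log k) := le_sqrt_of_sq_le (by nlinarith)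
  have hy : 1.2 * √(k * log k) ≤ √(k * logb 2 k) := by
    refine le_sqrt_of_sq_le ?_
    rw [mul_pow, sq_sqrt (by positivity), logb, mul_div_assoc', le_div_iff₀ (log_pos one_lt_two)]
    nlinarith [log_two_lt_d9, mul_pos (by positivity : (0 : ℝ) < k) (by linarith : (0 : ℝ) < log k)]
  rw [mul_assoc 4, rpow_three_halves_mul_sqrt (Nat.cast_nonneg k)]
  nlinarith

namespace PairDigraph

variable {V : Type*} [Fintype V] [DecidableEq V] (E : Finset V → Finset V → Prop)

def HasTriangularSubstructure : Prop :=
  ∀ a b c : V, a ≠ b → a ≠ c → b ≠ c →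
    (E {a, c} {b, c} ∧ E {b, c} {a, c}) ∨ E {a, b} {a, c} ∨ E {a, b} {b, c}

def IsDominating (D : Finset (Finset V)) : Prop :=
  ∀ v : Finset V, #v = 2 → v ∈ D ∨ ∃ u ∈ D, E u v

open Classical in
noncomputable def witnesses (a c : V) : Finset V :=
  {b | b ≠ a ∧ b ≠ c ∧ (E {a, b} {a, c} ∨ E {b, c} {a, c})}

noncomputable def poorlyWitnessed (t : ℕ) (a : V) : Finset V :=
  {c | c ≠ a ∧ #(witnesses E a c) ≤ t}

variable {E}

theorem mem_witnesses {a b c : V} :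
    b ∈ witnesses E a c ↔ b ≠ a ∧ b ≠ c ∧ (E {a, b} {a, c} ∨ E {b, c} {a, c}) := by
  simp [witnesses]

theorem mem_witnesses_of_notMem_witnesses (hE : HasTriangularSubstructure E) {a b c : V}
    (hab : a ≠ b) (hac : a ≠ c) (hbc : b ≠ c) (hb : b ∉ witnesses E a c) :
    c ∈ witnesses E a b := by
  simp only [mem_witnesses, not_and, not_or] at hb ⊢
  obtain ⟨hab', hcb'⟩ := hb (Ne.symm hab) hbc
  refine ⟨Ne.symm hac, Ne.symm hbc, ?_⟩
  rcases hE c b a hbc.symm hac.symm hab.symm with ⟨-, h⟩ | h | h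
  · rw [pair_comm b a, pair_comm c a] at h; exact absurd h hab'
  · rw [pair_comm c b, pair_comm c a] at h; exact absurd h hcb'
  · rw [pair_comm b a] at h; exact Or.inr h

theorem card_poorlyWitnessed_le (hE : HasTriangularSubstructure E) (t : ℕ) (a : V) :
    #(poorlyWitnessed E t a) ≤ 2 * t + 1 := by
  refine card_le_two_mul_add_one_of_antisymm (fun c b => b ≠ c ∧ b ∉ witnesses E a c) t ?_ ?_
  · simp only [poorlyWitnessed, mem_filter, mem_univ, true_and]
    rintro c ⟨hca, -⟩ b ⟨hba, -⟩ ⟨hbc, hb⟩ ⟨-, hc⟩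
    exact hc (mem_witnesses_of_notMem_witnesses hE hba.symm hca.symm hbc hb)
  · intro c hc
    set Q := poorlyWitnessed E t a
    have hcover : Q ⊆ {b ∈ Q | b ≠ c ∧ b ∉ witnesses E a c} ∪ witnesses E a c ∪ {c} := by
      intro b hb
      by_cases hbc : b = c
      · simp [hbc]
      by_cases hbw : b ∈ witnesses E a c
      · simp [hbw]
      · simp [hb, hbc, hbw]
    calc #Q ≤ #{b ∈ Q | b ≠ c ∧ b ∉ witnesses E a c} + #(witnesses E a c) + 1 :=
          (card_le_card hcover).trans ((card_union_le _ _).trans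
            (Nat.add_le_add (card_union_le _ _) (card_singleton c).le))
      _ ≤ #{b ∈ Q | b ≠ c ∧ b ∉ witnesses E a c} + t + 1 := by
        have := (mem_filter.mp hc).2.2; omega

theorem exists_isDominating_of_forall_not_disjoint (hE : HasTriangularSubstructure E) (t : ℕ)
    (S : Finset V) (hS : ∀ a c, t < #(witnesses E a c) → ¬Disjoint S (witnesses E a c)) :
    ∃ D : Finset (Finset V), D ⊆ univ.filter (fun v : Finset V => #v = 2) ∧ IsDominating E D ∧
      #D ≤ (#S + (2 * t + 1)) * Fintype.card V := by
  set D₁ : Finset (Finset V) := S.biUnion fun y => ({y}ᶜ : Finset V).image fun x => {y, x}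
  set D₂ : Finset (Finset V) := univ.biUnion fun a => (poorlyWitnessed E t a).image fun c => {a, c}
  refine ⟨D₁ ∪ D₂, ?_, ?_, ?_⟩
  · intro v hv
    simp only [D₁, D₂, poorlyWitnessed, mem_union, mem_biUnion, mem_image, mem_compl, mem_singleton,
      mem_filter, mem_univ, true_and] at hv ⊢
    rcases hv with ⟨y, -, x, hxy, rfl⟩ | ⟨a, c, ⟨hca, -⟩, rfl⟩
    · exact card_pair (Ne.symm hxy)
    · exact card_pair (Ne.symm hca)
  · intro v hv
    obtain ⟨a, c, hac, rfl⟩ := card_eq_two.mp hv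
    by_cases hlight : t < #(witnesses E a c)
    · obtain ⟨y, hyS, hyW⟩ := not_disjoint_iff.mp (hS a c hlight)
      obtain ⟨hya, hyc, hE | hE⟩ := mem_witnesses.mp hyW
      · refine Or.inr ⟨{y, a}, mem_union_left _ ?_, by rwa [pair_comm]⟩
        exact mem_biUnion.mpr ⟨y, hyS, mem_image.mpr ⟨a, by simpa using hya.symm, rfl⟩⟩
      · refine Or.inr ⟨{y, c}, mem_union_left _ ?_, hE⟩
        exact mem_biUnion.mpr ⟨y, hyS, mem_image.mpr ⟨c, by simpa using hyc.symm, rfl⟩⟩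
    · refine Or.inl (mem_union_right _ (mem_biUnion.mpr ⟨a, mem_univ a, ?_⟩))
      exact mem_image.mpr ⟨c, by simp [poorlyWitnessed, hac.symm, not_lt.mp hlight], rfl⟩
  · have h₁ : #D₁ ≤ #S * Fintype.card V := by
      simpa using card_biUnion_le.trans (sum_le_card_nsmul S _ _ fun y _ =>
        card_image_le.trans (card_le_univ ({y}ᶜ : Finset V)))
    have h₂ : #D₂ ≤ Fintype.card V * (2 * t + 1) := by
      simpa using card_biUnion_le.trans (sum_le_card_nsmul univ _ _ fun a _ =>
        card_image_le.trans (card_poorlyWitnessed_le hE t a))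
    calc #(D₁ ∪ D₂) ≤ #D₁ + #D₂ := card_union_le _ _
      _ ≤ #S * Fintype.card V + Fintype.card V * (2 * t + 1) := add_le_add h₁ h₂
      _ = (#S + (2 * t + 1)) * Fintype.card V := by ring

theorem exists_isDominating_card_le [Nonempty V] (hE : HasTriangularSubstructure E) {t s : ℕ}
    (h : Fintype.card V ^ 2 * (Fintype.card V - t) ^ s < Fintype.card V ^ s) :
    ∃ D : Finset (Finset V), D ⊆ univ.filter (fun v : Finset V => #v = 2) ∧ IsDominating E D ∧
      #D ≤ (s + (2 * t + 1)) * Fintype.card V := by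
  set I : Finset (V × V) := {p | t < #(witnesses E p.1 p.2)}
  have hI : #I ≤ Fintype.card V ^ 2 := (card_filter_le _ _).trans (by simp [sq])
  obtain ⟨S, hS, hhit⟩ := exists_card_le_forall_not_disjoint (fun p => witnesses E p.1 p.2) I
    (fun p hp => (mem_filter.mp hp).2.le) ((Nat.mul_le_mul_right _ hI).trans_lt h)
  obtain ⟨D, hD, hdom, hcard⟩ := exists_isDominating_of_forall_not_disjoint hE t S
    fun a c hac => hhit (a, c) (by simpa [I] using hac)
  exact ⟨D, hD, hdom, hcard.trans (by gcongr)⟩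

end PairDigraph

/-- For all sufficiently large `k`, any digraph on the 2-element subsets of `[k]`
with the triangular substructure property has a dominating set of size at most
`4 k^{3/2} √(log₂ k)`. -/
theorem stmt_7 :
    ∃ k0 : ℕ, ∀ k : ℕ, k0 ≤ k →
      ∀ E : Finset (Fin k) → Finset (Fin k) → Prop,
        (∀ a b c : Fin k, a ≠ b → a ≠ c → b ≠ c →
          (E {a, c} {b, c} ∧ E {b, c} {a, c}) ∨ E {a, b} {a, c} ∨ E {a, b} {b, c}) →
        ∃ D : Finset (Finset (Fin k)),
          D ⊆ Finset.univ.filter (fun s : Finset (Fin k) => s.card = 2) ∧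
          (∀ v : Finset (Fin k), v.card = 2 → v ∈ D ∨ ∃ u ∈ D, E u v) ∧
          (D.card : ℝ) ≤ 4 * (k : ℝ) ^ ((3 : ℝ) / 2) * Real.sqrt (Real.logb 2 k) := by
  refine ⟨64, fun k hk E hE => ?_⟩
  have : Nonempty (Fin k) := ⟨⟨0, by omega⟩⟩
  have hk1 : (1 : ℝ) < k := by exact_mod_cast (by omega : 1 < k)
  set t := ⌈√(k * log k)⌉₊
  have hpow : k ^ 2 * (k - t) ^ (2 * t + 1) < k ^ (2 * t + 1) := by
    refine sq_mul_sub_pow_lt_pow (by omega) (ceil_sqrt_mul_log_le k) ?_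
    rw [mul_assoc]
    exact two_mul_lt_ceil_sqrt_mul (mul_pos (by positivity) (log_pos hk1))
  obtain ⟨D, hD, hdom, hcard⟩ :=
    PairDigraph.exists_isDominating_card_le hE (by simpa using hpow)
  refine ⟨D, hD, hdom, ?_⟩
  calc (#D : ℝ) ≤ 2 * (2 * t + 1) * k := by
        rw [Fintype.card_fin, ← two_mul] at hcard
        exact_mod_cast hcard
    _ ≤ _ := two_mul_two_mul_add_one_mul_le hk (Nat.ceil_lt_add_one (by positivity))
end

section
/- Let G be a digraph on vertex set V with |V| vertices, and set r := √(k log k), ℓ := k^{3/2}√(log k), where |V| = k(k−1)/2. If B denotes the set of vertices of in-degree < r, then a uniformly random ℓ-subset R of V fails to dominate some vertex of V∖B with probability at most |V|/k², which is at most 1/2. -/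
private lemma aux_id8 (m ℓ : ℕ) : m * Nat.choose (m - 1) ℓ = (m - ℓ) * Nat.choose m ℓ := by
  cases m with
  | zero => cases ℓ <;> simp
  | succ n =>
    have h1 := Nat.add_one_mul_choose_eq n ℓ
    simp only [Nat.succ_sub_one]
    rw [h1, Nat.choose_succ_right_eq (n+1) ℓ, Nat.mul_comm]

private lemma aux_step8 (m n ℓ : ℕ) (hmn : m ≤ n) :
    n * Nat.choose (m - 1) ℓ ≤ (n - ℓ) * Nat.choose m ℓ := by
  rcases Nat.eq_zero_or_pos m with hm | hm
  · subst hm; cases ℓ <;> simp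
  · rcases le_or_gt m ℓ with h | h
    · rcases eq_or_lt_of_le h with h | h
      · subst h
        rw [Nat.choose_eq_zero_of_lt (by omega : m - 1 < m)]
        simp
      · rw [Nat.choose_eq_zero_of_lt (by omega : m - 1 < ℓ)]
        simp
    · have key : m * (n * Nat.choose (m-1) ℓ) ≤ m * ((n - ℓ) * Nat.choose m ℓ) := by
        calc m * (n * Nat.choose (m-1) ℓ) = n * (m * Nat.choose (m-1) ℓ) := by ring
        _ = n * ((m - ℓ) * Nat.choose m ℓ) := by rw [aux_id8]
        _ = (n * (m - ℓ)) * Nat.choose m ℓ := by ring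
        _ ≤ ((n - ℓ) * m) * Nat.choose m ℓ := by
            apply Nat.mul_le_mul_right
            have hlm : ℓ ≤ m := h.le
            have hln : ℓ ≤ n := le_trans hlm hmn
            zify [hlm, hln]
            nlinarith [(Nat.cast_le (α := ℤ)).mpr hmn, (Nat.cast_le (α := ℤ)).mpr hlm]
        _ = m * ((n - ℓ) * Nat.choose m ℓ) := by ring
      exact Nat.le_of_mul_le_mul_left key hm

private lemma aux_pow8 (n ℓ : ℕ) : ∀ d : ℕ,
    Nat.choose (n - d) ℓ * n ^ d ≤ Nat.choose n ℓ * (n - ℓ) ^ d := by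
  intro d
  induction d with
  | zero => simp
  | succ d ih =>
    have h1 : Nat.choose (n - (d+1)) ℓ * n ≤ Nat.choose (n - d) ℓ * (n - ℓ) := by
      have hh := aux_step8 (n - d) n ℓ (Nat.sub_le n d)
      have e : n - d - 1 = n - (d+1) := by omega
      rw [e] at hh
      calc Nat.choose (n - (d+1)) ℓ * n = n * Nat.choose (n - (d+1)) ℓ := by ring
      _ ≤ (n - ℓ) * Nat.choose (n - d) ℓ := hh
      _ = Nat.choose (n - d) ℓ * (n - ℓ) := by ring
    calc Nat.choose (n - (d+1)) ℓ * n ^ (d+1)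
        = (Nat.choose (n - (d+1)) ℓ * n) * n ^ d := by ring
    _ ≤ (Nat.choose (n - d) ℓ * (n - ℓ)) * n ^ d := Nat.mul_le_mul_right _ h1
    _ = (Nat.choose (n - d) ℓ * n ^ d) * (n - ℓ) := by ring
    _ ≤ (Nat.choose n ℓ * (n - ℓ) ^ d) * (n - ℓ) := Nat.mul_le_mul_right _ ih
    _ = Nat.choose n ℓ * (n - ℓ) ^ (d+1) := by ring

private lemma one_sub_le_two_rpow8 (x : ℝ) (hx : 0 ≤ x) : 1 - x ≤ (2:ℝ) ^ (-x) := by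
  have h1 : 1 - x ≤ Real.exp (-x) := by linarith [Real.add_one_le_exp (-x)]
  have h2 : Real.exp (-x) ≤ (2:ℝ) ^ (-x) := by
    rw [Real.rpow_def_of_pos (by norm_num)]
    apply Real.exp_le_exp.mpr
    have hl : Real.log 2 ≤ 1 := by
      have := Real.log_le_sub_one_of_pos (by norm_num : (0:ℝ) < 2); linarith
    nlinarith
  linarith



open Classical in
/-- Let `V` be the 2-element subsets of `[k]` (so `|V| = k(k-1)/2`), let
`r = √(k log₂ k)`, and let `ℓ ≥ k^{3/2} √(log₂ k)` with `ℓ ≤ |V|`. A uniformly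
random `ℓ`-subset `R` of `V` fails to dominate some vertex of in-degree at least
`r` with probability at most `|V|/k²`, which is at most `1/2`. -/
theorem stmt_8 (k ℓ : ℕ) (E : Finset (Fin k) → Finset (Fin k) → Prop)
    (hℓ : (k : ℝ) ^ ((3 : ℝ) / 2) * Real.sqrt (Real.logb 2 k) ≤ ℓ)
    (hℓV : ℓ ≤ (Finset.univ.filter (fun s : Finset (Fin k) => s.card = 2)).card) :
    let V := Finset.univ.filter (fun s : Finset (Fin k) => s.card = 2)
    let r := Real.sqrt ((k : ℝ) * Real.logb 2 k)
    let bad := (V.powersetCard ℓ).filter (fun R =>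
      ∃ v ∈ V, r ≤ ((V.filter (fun u => E u v)).card : ℝ) ∧
        ¬(v ∈ R ∨ ∃ u ∈ R, E u v))
    (bad.card : ℝ) / (V.card.choose ℓ) ≤ (V.card : ℝ) / k ^ 2 ∧
      (V.card : ℝ) / k ^ 2 ≤ 1 / 2 := by
  intro V r bad
  have hVcard : V.card = k.choose 2 := by
    have hV2 : V = Finset.powersetCard 2 (Finset.univ : Finset (Fin k)) := by
      rw [Finset.powersetCard_eq_filter, Finset.powerset_univ]
    rw [hV2, Finset.card_powersetCard, Finset.card_univ, Fintype.card_fin]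
  have hch : k.choose 2 * 2 ≤ k ^ 2 := by
    rw [Nat.choose_two_right]
    calc k * (k-1) / 2 * 2 ≤ k * (k-1) := Nat.div_mul_le_self _ 2
    _ ≤ k * k := Nat.mul_le_mul_left k (Nat.sub_le k 1)
    _ = k ^ 2 := (sq k).symm
  constructor
  · -- main bound
    by_cases hk2 : k < 2
    · -- V is empty, bad is empty
      have hVe : V = ∅ := Finset.card_eq_zero.mp
        (by rw [hVcard, Nat.choose_eq_zero_of_lt hk2])
      have hbad : bad = ∅ := by
        rw [Finset.eq_empty_iff_forall_notMem]
        intro R hR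
        obtain ⟨-, v, hvV, -⟩ := Finset.mem_filter.mp hR
        rw [hVe] at hvV
        exact absurd hvV (Finset.notMem_empty v)
      rw [hbad, hVe]
      simp
    · push_neg at hk2
      have hk0 : (0:ℝ) < k := by exact_mod_cast (by omega : 0 < k)
      have hk2' : (2:ℝ) ≤ k := by exact_mod_cast hk2
      set L := Real.logb 2 k with hLdef
      have hL1 : 1 ≤ L := by
        rw [hLdef, Real.le_logb_iff_rpow_le (by norm_num) hk0]
        simpa using hk2'
      have hL0 : (0:ℝ) ≤ L := by linarith
      have hr0 : 0 ≤ r := Real.sqrt_nonneg _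
      set n := V.card with hndef
      have hnpos : 0 < n := by rw [hVcard]; exact Nat.choose_pos hk2
      have hn0 : (0:ℝ) < n := by exact_mod_cast hnpos
      have hℓn : ℓ ≤ n := hℓV
      have hn2 : (n:ℝ) * 2 ≤ (k:ℝ)^2 := by
        rw [hVcard]
        exact_mod_cast hch
      set d := ⌈r⌉₊ with hddef
      -- per-vertex count
      have key : ∀ v ∈ V.filter (fun v => r ≤ ((V.filter (fun u => E u v)).card : ℝ)),
          ((V.powersetCard ℓ).filter
            (fun R => ¬(v ∈ R ∨ ∃ u ∈ R, E u v))).card ≤ Nat.choose (n - d) ℓ := by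
        intro v hv
        obtain ⟨hvV, hvr⟩ := Finset.mem_filter.mp hv
        set N := V.filter (fun u => E u v) with hNdef
        have hNV : N ⊆ V := Finset.filter_subset _ _
        have hsub : (V.powersetCard ℓ).filter (fun R => ¬(v ∈ R ∨ ∃ u ∈ R, E u v))
            ⊆ (V \ N).powersetCard ℓ := by
          intro R hR
          obtain ⟨hRmem, hRp⟩ := Finset.mem_filter.mp hR
          obtain ⟨hRV, hRcard⟩ := Finset.mem_powersetCard.mp hRmem
          push_neg at hRp
          obtain ⟨hvR, hER⟩ := hRp
          refine Finset.mem_powersetCard.mpr ⟨?_, hRcard⟩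
          intro u hu
          refine Finset.mem_sdiff.mpr ⟨hRV hu, fun huN => ?_⟩
          exact (hER u hu) ((Finset.mem_filter.mp huN).2)
        calc ((V.powersetCard ℓ).filter (fun R => ¬(v ∈ R ∨ ∃ u ∈ R, E u v))).card
            ≤ ((V \ N).powersetCard ℓ).card := Finset.card_le_card hsub
        _ = ((V \ N).card).choose ℓ := Finset.card_powersetCard ℓ _
        _ ≤ (n - d).choose ℓ := by
            apply Nat.choose_le_choose
            have hdN : d ≤ N.card := Nat.ceil_le.mpr hvr
            have hcs := Finset.card_sdiff_of_subset hNV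
            have hNn : N.card ≤ n := Finset.card_le_card hNV
            omega
      -- union bound
      have hbadsub : bad ⊆ (V.filter (fun v => r ≤ ((V.filter (fun u => E u v)).card : ℝ))).biUnion
          (fun v => (V.powersetCard ℓ).filter (fun R => ¬(v ∈ R ∨ ∃ u ∈ R, E u v))) := by
        intro R hR
        obtain ⟨hRmem, v, hvV, hvr, hnd⟩ := Finset.mem_filter.mp hR
        exact Finset.mem_biUnion.mpr ⟨v, Finset.mem_filter.mpr ⟨hvV, hvr⟩,
          Finset.mem_filter.mpr ⟨hRmem, hnd⟩⟩
      have hcard : bad.card ≤ n * Nat.choose (n - d) ℓ := by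
        calc bad.card ≤ _ := Finset.card_le_card hbadsub
        _ ≤ ∑ v ∈ V.filter (fun v => r ≤ ((V.filter (fun u => E u v)).card : ℝ)),
              ((V.powersetCard ℓ).filter (fun R => ¬(v ∈ R ∨ ∃ u ∈ R, E u v))).card :=
            Finset.card_biUnion_le
        _ ≤ ∑ _v ∈ V.filter (fun v => r ≤ ((V.filter (fun u => E u v)).card : ℝ)),
              Nat.choose (n - d) ℓ := Finset.sum_le_sum key
        _ = (V.filter (fun v => r ≤ ((V.filter (fun u => E u v)).card : ℝ))).card
              * Nat.choose (n - d) ℓ := by rw [Finset.sum_const, smul_eq_mul]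
        _ ≤ n * Nat.choose (n - d) ℓ :=
            Nat.mul_le_mul_right _ (Finset.card_filter_le _ _)
      -- analytic estimates
      have hrl : (k:ℝ)^2 * L ≤ r * ℓ := by
        have h1 : r * ((k:ℝ) ^ ((3:ℝ)/2) * Real.sqrt L) ≤ r * ℓ :=
          mul_le_mul_of_nonneg_left hℓ hr0
        have h2 : r = Real.sqrt k * Real.sqrt L := by
          rw [hLdef] at *
          exact Real.sqrt_mul (by positivity) _
        have h3 : Real.sqrt L * Real.sqrt L = L := Real.mul_self_sqrt hL0
        have h4 : Real.sqrt k * (k:ℝ) ^ ((3:ℝ)/2) = (k:ℝ)^2 := by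
          rw [Real.sqrt_eq_rpow, ← Real.rpow_add hk0]
          norm_num
        calc (k:ℝ)^2 * L = (Real.sqrt k * (k:ℝ) ^ ((3:ℝ)/2)) * (Real.sqrt L * Real.sqrt L) := by
              rw [h3, h4]
        _ = r * ((k:ℝ) ^ ((3:ℝ)/2) * Real.sqrt L) := by rw [h2]; ring
        _ ≤ r * ℓ := h1
      have hrd : r ≤ (d:ℝ) := Nat.le_ceil r
      have hdl : 2 * L ≤ (d:ℝ) * ℓ / n := by
        rw [le_div_iff₀ hn0]
        have hℓ0 : (0:ℝ) ≤ ℓ := by positivity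
        nlinarith
      have hchoosepos : (0:ℝ) < (Nat.choose n ℓ : ℝ) := by
        exact_mod_cast Nat.choose_pos hℓn
      have h2L : (2:ℝ) ^ L = k := by
        rw [hLdef]; exact Real.rpow_logb (by norm_num) (by norm_num) hk0
      have hratio : (Nat.choose (n - d) ℓ : ℝ) * (k:ℝ)^2 ≤ Nat.choose n ℓ := by
        have hcast : (Nat.choose (n - d) ℓ : ℝ) * (n:ℝ)^d
            ≤ (Nat.choose n ℓ : ℝ) * ((n:ℝ) - ℓ)^d := by
          have := aux_pow8 n ℓ d
          have hc : (((n - ℓ : ℕ)):ℝ) = (n:ℝ) - ℓ := by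
            rw [Nat.cast_sub hℓn]
          calc (Nat.choose (n - d) ℓ : ℝ) * (n:ℝ)^d
              = ((Nat.choose (n - d) ℓ * n ^ d : ℕ) : ℝ) := by push_cast; ring
          _ ≤ ((Nat.choose n ℓ * (n - ℓ) ^ d : ℕ) : ℝ) := by exact_mod_cast this
          _ = (Nat.choose n ℓ : ℝ) * ((n:ℝ) - ℓ)^d := by push_cast [hc]; ring
        have hstep1 : (Nat.choose (n - d) ℓ : ℝ)
            ≤ (Nat.choose n ℓ : ℝ) * (((n:ℝ) - ℓ)/n)^d := by
          rw [div_pow, ← mul_div_assoc, le_div_iff₀ (by positivity)]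
          exact hcast
        have hbase0 : (0:ℝ) ≤ ((n:ℝ) - ℓ)/n := by
          apply div_nonneg _ hn0.le
          have : (ℓ:ℝ) ≤ n := by exact_mod_cast hℓn
          linarith
        have hbase : ((n:ℝ) - ℓ)/n ≤ (2:ℝ) ^ (-((ℓ:ℝ)/n)) := by
          have he : ((n:ℝ) - ℓ)/n = 1 - (ℓ:ℝ)/n := by
            field_simp
          rw [he]
          exact one_sub_le_two_rpow8 _ (by positivity)
        have hstep2 : (((n:ℝ) - ℓ)/n)^d ≤ ((2:ℝ) ^ (-((ℓ:ℝ)/n)))^d :=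
          pow_le_pow_left₀ hbase0 hbase d
        have hstep3 : ((2:ℝ) ^ (-((ℓ:ℝ)/n)))^d = (2:ℝ) ^ (-((ℓ:ℝ)/n) * d) := by
          rw [← Real.rpow_natCast ((2:ℝ) ^ (-((ℓ:ℝ)/n))) d, ← Real.rpow_mul (by norm_num)]
        have hstep4 : (2:ℝ) ^ (-((ℓ:ℝ)/n) * d) ≤ (2:ℝ) ^ (-(2*L)) := by
          apply Real.rpow_le_rpow_of_exponent_le (by norm_num)
          have : -((ℓ:ℝ)/n) * d = -((d:ℝ) * ℓ / n) := by ring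
          rw [this]
          linarith
        have hk2eq : (2:ℝ) ^ (-(2*L)) * (k:ℝ)^2 = 1 := by
          rw [← h2L, ← Real.rpow_natCast ((2:ℝ)^L) 2, ← Real.rpow_mul (by norm_num),
            ← Real.rpow_add (by norm_num : (0:ℝ) < 2)]
          push_cast
          rw [show (-(2*L) + L * 2 : ℝ) = 0 by ring, Real.rpow_zero]
        calc (Nat.choose (n - d) ℓ : ℝ) * (k:ℝ)^2
            ≤ ((Nat.choose n ℓ : ℝ) * (2:ℝ) ^ (-(2*L))) * (k:ℝ)^2 := by
              apply mul_le_mul_of_nonneg_right _ (by positivity)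
              calc (Nat.choose (n - d) ℓ : ℝ)
                  ≤ (Nat.choose n ℓ : ℝ) * (((n:ℝ) - ℓ)/n)^d := hstep1
              _ ≤ (Nat.choose n ℓ : ℝ) * ((2:ℝ) ^ (-(2*L))) := by
                  apply mul_le_mul_of_nonneg_left _ hchoosepos.le
                  calc (((n:ℝ) - ℓ)/n)^d ≤ ((2:ℝ) ^ (-((ℓ:ℝ)/n)))^d := hstep2
                  _ = (2:ℝ) ^ (-((ℓ:ℝ)/n) * d) := hstep3
                  _ ≤ (2:ℝ) ^ (-(2*L)) := hstep4
        _ = (Nat.choose n ℓ : ℝ) * ((2:ℝ) ^ (-(2*L)) * (k:ℝ)^2) := by ring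
        _ = (Nat.choose n ℓ : ℝ) := by rw [hk2eq, mul_one]
      -- conclude
      rw [div_le_div_iff₀ hchoosepos (by positivity)]
      have hcardR : (bad.card : ℝ) ≤ (n:ℝ) * (Nat.choose (n - d) ℓ : ℝ) := by
        exact_mod_cast hcard
      calc (bad.card : ℝ) * (k:ℝ)^2 ≤ ((n:ℝ) * (Nat.choose (n - d) ℓ : ℝ)) * (k:ℝ)^2 :=
            mul_le_mul_of_nonneg_right hcardR (by positivity)
      _ = (n:ℝ) * ((Nat.choose (n - d) ℓ : ℝ) * (k:ℝ)^2) := by ring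
      _ ≤ (n:ℝ) * (Nat.choose n ℓ : ℝ) := mul_le_mul_of_nonneg_left hratio hn0.le
  · -- second bound
    rcases Nat.eq_zero_or_pos k with hk | hk
    · subst hk
      rw [hVcard]
      norm_num
    · have hk0 : (0:ℝ) < k := by exact_mod_cast hk
      rw [div_le_div_iff₀ (by positivity) (by norm_num)]
      rw [hVcard]
      have : ((k.choose 2 : ℕ) : ℝ) * 2 ≤ ((k^2 : ℕ) : ℝ) := by exact_mod_cast hch
      push_cast at this ⊢
      linarith
end

section
/- For all sufficiently large k, there exists a directed graph G_k on vertex set {2-element subsets of [k]} satisfying the triangular substructure property whose minimum dominating set has size at least k^{3/2}/(8√(log k)). -/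
/-!
Take a prime `q` of order `√k` and the graph `G` on `𝔽_q²` in which `(x, y) ~ (x', y')` iff
`x ≠ x'` and `y + y' = x x'`, placed inside `[k]`. It is `(q - 1)`-regular, so it has about `q³ / 2`
edges, and two distinct vertices have at most one common neighbour. Rank all pairs injectively with
the edges of `G` on top, and let `u → v` when `u ∩ v` is one point and the third side `u ∆ v` of the
triangle they span outranks `v`; comparing `{a, c}` with `{b, c}` gives the triangular property.
If `u = {s, t}` dominates an edge `e = {s, w}` of `G` outside `D`, then `{t, w}` outranks an edge,
hence is an edge, so `w` is the unique common neighbour of `s` and `t`: `e` is determined by `u`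
and `s`. Thus `|E(G)| ≤ 3 |D|`, i.e. `|D| ≳ q³ ≍ k^{3/2}`.
-/

open Finset Function SimpleGraph
open scoped symmDiff

namespace Finset

lemma card_sigma_powersetCard_one {α : Type*} {D : Finset (Finset α)} (hD : ∀ u ∈ D, #u = 2) :
    #(D.sigma fun u => u.powersetCard 1) = 2 * #D := by
  rw [card_sigma, sum_congr rfl fun u hu => by rw [card_powersetCard, hD u hu], sum_const,
    smul_eq_mul, mul_comm]
  rfl

variable {α : Type*} [DecidableEq α]

lemma pair_inter_pair_left {a b c : α} (hbc : b ≠ c) :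
    ({a, b} : Finset α) ∩ {a, c} = {a} := by
  ext x; simp only [mem_inter, mem_insert, mem_singleton]; grind

lemma pair_symmDiff_pair_left {a b c : α} (hab : a ≠ b) (hac : a ≠ c) (hbc : b ≠ c) :
    ({a, b} : Finset α) ∆ {a, c} = {b, c} := by
  ext x; simp only [mem_symmDiff, mem_insert, mem_singleton]; grind

lemma exists_ne_eq_pair_of_card_eq_two {u : Finset α} {s : α} (hu : #u = 2) (hs : s ∈ u) :
    ∃ t, t ≠ s ∧ u = {s, t} := by
  obtain ⟨t, ht⟩ := card_eq_one.mp (by rw [card_erase_of_mem hs, hu] : #(u.erase s) = 1)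
  refine ⟨t, fun h => by simpa [h] using ht.symm.subset (mem_singleton_self t), ?_⟩
  rw [← ht, insert_erase hs]

lemma exists_eq_pair_of_card_inter_eq_one {u e : Finset α} (hu : #u = 2) (he : #e = 2)
    (hue : #(u ∩ e) = 1) :
    ∃ s t w, t ≠ s ∧ w ≠ s ∧ t ≠ w ∧ u ∩ e = {s} ∧ u = {s, t} ∧ e = {s, w} := by
  obtain ⟨s, hs⟩ := card_eq_one.mp hue
  have hsue : s ∈ u ∩ e := hs ▸ mem_singleton_self s
  obtain ⟨t, hts, rfl⟩ := exists_ne_eq_pair_of_card_eq_two hu (mem_inter.mp hsue).1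
  obtain ⟨w, hws, rfl⟩ := exists_ne_eq_pair_of_card_eq_two he (mem_inter.mp hsue).2
  refine ⟨s, t, w, hts, hws, fun htw => hts ?_, hs, rfl, rfl⟩
  subst htw
  simpa using hs.subset (by simp : t ∈ ({s, t} : Finset α) ∩ {s, t})

lemma exists_injective_rank_top {β : Type*} [Fintype β] (H : Finset β) :
    ∃ r : β → ℕ, Injective r ∧ ∀ x ∈ H, ∀ y, r x < r y → y ∈ H := by
  classical
  let idx := Fintype.equivFin β
  refine ⟨fun x => idx x + if x ∈ H then Fintype.card β else 0, fun x y hxy => ?_, ?_⟩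
  · have hx := (idx x).isLt
    have hy := (idx y).isLt
    refine idx.injective (Fin.ext ?_)
    dsimp only at hxy
    split_ifs at hxy <;> omega
  · intro x hx y hxy
    by_contra hy
    have := (idx y).isLt
    simp only [hx, hy, if_true, if_false] at hxy
    omega

end Finset

lemma Sym2.toFinset_injective {α : Type*} [DecidableEq α] : Injective (Sym2.toFinset (α := α)) :=
  fun z z' h => Sym2.ext fun x => by rw [← mem_toFinset, h, mem_toFinset]

namespace SimpleGraph

variable {α : Type*} [Fintype α] [DecidableEq α] (G : SimpleGraph α) [DecidableRel G.Adj]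

lemma pair_mem_cliqueFinset_two {a b : α} :
    ({a, b} : Finset α) ∈ G.cliqueFinset 2 ↔ G.Adj a b := by
  rw [mem_cliqueFinset_iff, isNClique_iff, coe_pair, isClique_pair]
  by_cases hab : a = b
  · simp [hab]
  · simp [hab, card_pair hab]

lemma image_toFinset_edgeFinset : G.edgeFinset.image Sym2.toFinset = G.cliqueFinset 2 := by
  ext e
  simp only [mem_image, mem_edgeFinset]
  constructor
  · rintro ⟨z, hz, rfl⟩
    induction z using Sym2.ind with
    | _ a b => rwa [Sym2.toFinset_mk_eq, pair_mem_cliqueFinset_two]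
  · intro he
    obtain ⟨a, b, -, rfl⟩ := card_eq_two.mp (mem_cliqueFinset_iff.mp he).card_eq
    exact ⟨s(a, b), (G.pair_mem_cliqueFinset_two).mp he, Sym2.toFinset_mk_eq⟩

lemma card_cliqueFinset_two : #(G.cliqueFinset 2) = #G.edgeFinset := by
  rw [← image_toFinset_edgeFinset, card_image_of_injective _ Sym2.toFinset_injective]

end SimpleGraph

section RankDigraph

variable {α : Type*} [DecidableEq α]

def rankDigraph (r : Finset α → ℕ) (u v : Finset α) : Prop :=
  #(u ∩ v) = 1 ∧ r v < r (u ∆ v)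

lemma rankDigraph_triangle {r : Finset α → ℕ} (hr : Injective r) {a b c : α}
    (hab : a ≠ b) (hac : a ≠ c) (hbc : b ≠ c) :
    rankDigraph r {a, b} {a, c} ∨ rankDigraph r {a, b} {b, c} := by
  have hne : ({a, c} : Finset α) ≠ {b, c} := fun h => by
    simpa [hab, hac] using h.subset (mem_insert_self a {c})
  rcases (hr.ne hne).lt_or_gt with h | h
  · refine Or.inl ⟨by rw [pair_inter_pair_left hbc, card_singleton], ?_⟩
    rwa [pair_symmDiff_pair_left hab hac hbc]
  · rw [pair_comm a b]
    refine Or.inr ⟨by rw [pair_inter_pair_left hac, card_singleton], ?_⟩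
    rwa [pair_symmDiff_pair_left hab.symm hbc hac]

variable [Fintype α] {G : SimpleGraph α} [DecidableRel G.Adj] {r : Finset α → ℕ}

lemma eq_of_rankDigraph_of_inter_eq (hG : ∀ s t, s ≠ t → (G.commonNeighbors s t).Subsingleton)
    (hr : ∀ e ∈ G.cliqueFinset 2, ∀ v, r e < r v → v ∈ G.cliqueFinset 2)
    {u e e' : Finset α} (hu : #u = 2) (he : e ∈ G.cliqueFinset 2) (he' : e' ∈ G.cliqueFinset 2)
    (hue : rankDigraph r u e) (hue' : rankDigraph r u e') (hinter : u ∩ e = u ∩ e') : e = e' := by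
  obtain ⟨s, t, w, hts, hws, htw, hs, rfl, rfl⟩ :=
    exists_eq_pair_of_card_inter_eq_one hu (mem_cliqueFinset_iff.mp he).card_eq hue.1
  obtain ⟨s', t', w', -, hws', htw', hs', hu', rfl⟩ :=
    exists_eq_pair_of_card_inter_eq_one hu (mem_cliqueFinset_iff.mp he').card_eq hue'.1
  obtain rfl : s = s' := singleton_inj.mp (hs.symm.trans (hinter.trans hs'))
  obtain rfl : t = t' := by
    simpa [hts] using hu'.subset (mem_insert_of_mem (mem_singleton_self t))
  have hside : ∀ {w}, w ≠ s → t ≠ w → {s, w} ∈ G.cliqueFinset 2 → rankDigraph r {s, t} {s, w} →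
      w ∈ G.commonNeighbors s t := fun hws htw he hue => by
    have hthird := hr _ he _ hue.2
    rw [pair_symmDiff_pair_left hts.symm hws.symm htw] at hthird
    exact ⟨G.pair_mem_cliqueFinset_two.mp he, G.pair_mem_cliqueFinset_two.mp hthird⟩
  rw [hG s t hts.symm (hside hws htw he hue) (hside hws' htw' he' hue')]

theorem card_cliqueFinset_two_le_three_mul_card
    (hG : ∀ s t, s ≠ t → (G.commonNeighbors s t).Subsingleton)
    (hr : ∀ e ∈ G.cliqueFinset 2, ∀ v, r e < r v → v ∈ G.cliqueFinset 2)
    {D : Finset (Finset α)} (hD : ∀ u ∈ D, #u = 2)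
    (hdom : ∀ e ∈ G.cliqueFinset 2, e ∉ D → ∃ u ∈ D, rankDigraph r u e) :
    #(G.cliqueFinset 2) ≤ 3 * #D := by
  set H := G.cliqueFinset 2
  have hcover : ∀ e ∈ H \ D, ∃ u ∈ D, rankDigraph r u e := fun e he =>
    hdom e (mem_sdiff.mp he).1 (mem_sdiff.mp he).2
  choose! dom hdomD hdomE using hcover
  let flag : Finset α → Σ _ : Finset α, Finset α := fun e => ⟨dom e, dom e ∩ e⟩
  have hmaps : ∀ e ∈ H \ D, flag e ∈ D.sigma fun u => u.powersetCard 1 := fun e he =>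
    mem_sigma.mpr ⟨hdomD e he, mem_powersetCard.mpr ⟨inter_subset_left, (hdomE e he).1⟩⟩
  have hinj : Set.InjOn flag ↑(H \ D) := by
    intro e he e' he' h
    obtain ⟨hdom_eq, hinter⟩ := Sigma.mk.inj_iff.mp h
    have hue' := hdomE e' he'
    rw [← hdom_eq] at hue'
    exact eq_of_rankDigraph_of_inter_eq hG hr (hD _ (hdomD e he)) (mem_sdiff.mp he).1
      (mem_sdiff.mp he').1 (hdomE e he) hue' (by simpa [flag, hdom_eq] using hinter)
  calc #H = #(H ∩ D) + #(H \ D) := (card_inter_add_card_sdiff _ _).symm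
    _ ≤ #D + 2 * #D := add_le_add (card_le_card inter_subset_right)
        (card_sigma_powersetCard_one hD ▸ card_le_card_of_injOn flag hmaps hinj)
    _ = 3 * #D := by ring

end RankDigraph

lemma SimpleGraph.commonNeighbors_map_subsingleton {V W : Type*} {G : SimpleGraph V}
    (f : V ↪ W) (hG : ∀ v w, v ≠ w → (G.commonNeighbors v w).Subsingleton) {v w : W}
    (h : v ≠ w) :
    ((G.map f).commonNeighbors v w).Subsingleton := by
  intro x hx y hy
  obtain ⟨hvx, hwx⟩ := (mem_commonNeighbors _).mp hx
  obtain ⟨hvy, hwy⟩ := (mem_commonNeighbors _).mp hy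
  obtain ⟨a, b, -, rfl, rfl⟩ := (map_adj f G _ _).mp hvx
  obtain ⟨c, -, -, rfl, -⟩ := (map_adj f G _ _).mp hwx
  obtain ⟨-, d, -, -, rfl⟩ := (map_adj f G _ _).mp hvy
  rw [map_adj_apply] at hvx hwx hvy hwy
  exact congrArg f (hG a c (fun hac => h (congrArg f hac)) ⟨hvx, hwx⟩ ⟨hvy, hwy⟩)

def affinePolarityGraph (F : Type*) [CommRing F] : SimpleGraph (F × F) where
  Adj p p' := p.1 ≠ p'.1 ∧ p.2 + p'.2 = p.1 * p'.1
  symm := ⟨fun _ _ h => ⟨h.1.symm, by rw [add_comm, mul_comm]; exact h.2⟩⟩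
  loopless := ⟨fun _ h => h.1 rfl⟩

namespace affinePolarityGraph

variable {F : Type*} [CommRing F]

lemma adj_iff {p p' : F × F} :
    (affinePolarityGraph F).Adj p p' ↔ p.1 ≠ p'.1 ∧ p.2 + p'.2 = p.1 * p'.1 :=
  Iff.rfl

instance [DecidableEq F] : DecidableRel (affinePolarityGraph F).Adj :=
  fun _ _ => inferInstanceAs (Decidable (_ ∧ _))

lemma commonNeighbors_subsingleton [IsDomain F] {p₁ p₂ : F × F} (h : p₁ ≠ p₂) :
    ((affinePolarityGraph F).commonNeighbors p₁ p₂).Subsingleton := by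
  intro r hr r' hr'
  obtain ⟨h₁, h₂⟩ := (mem_commonNeighbors _).mp hr
  obtain ⟨h₁', h₂'⟩ := (mem_commonNeighbors _).mp hr'
  rw [adj_iff] at h₁ h₂ h₁' h₂'
  have hx : p₁.1 - p₂.1 ≠ 0 := fun hx => h (Prod.ext (sub_eq_zero.mp hx)
    (by linear_combination h₁.2 - h₂.2 + r.1 * hx))
  have hr₁ : r.1 = r'.1 := mul_left_cancel₀ hx (by linear_combination h₁'.2 - h₂'.2 - h₁.2 + h₂.2)
  exact Prod.ext hr₁ (by linear_combination h₁.2 - h₁'.2 + p₁.1 * hr₁)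

variable [Fintype F] [DecidableEq F]

lemma neighborFinset_eq (p : F × F) :
    (affinePolarityGraph F).neighborFinset p =
      (univ.erase p.1).image fun x => (x, p.1 * x - p.2) := by
  ext ⟨x, y⟩
  simp only [mem_neighborFinset, adj_iff, mem_image, mem_erase, mem_univ, and_true,
    Prod.mk.injEq]
  constructor
  · rintro ⟨hx, hy⟩
    exact ⟨x, Ne.symm hx, rfl, by linear_combination -hy⟩
  · rintro ⟨x, hx, rfl, rfl⟩
    exact ⟨Ne.symm hx, by ring⟩

lemma isRegularOfDegree : (affinePolarityGraph F).IsRegularOfDegree (Fintype.card F - 1) := by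
  intro p
  rw [← card_neighborFinset_eq_degree, neighborFinset_eq,
    card_image_of_injective _ fun x y h => (Prod.mk.inj h).1, card_erase_of_mem (mem_univ _),
    card_univ]

lemma two_mul_card_edgeFinset :
    2 * #(affinePolarityGraph F).edgeFinset = Fintype.card F ^ 2 * (Fintype.card F - 1) := by
  rw [← sum_degrees_eq_twice_card_edges, sum_congr rfl fun p _ => isRegularOfDegree.degree_eq p,
    sum_const, card_univ, Fintype.card_prod, smul_eq_mul, sq]

end affinePolarityGraph

lemma exists_prime_sq_le_le_sq {k : ℕ} (hk : 64 ≤ k) :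
    ∃ q, q.Prime ∧ q ^ 2 ≤ k ∧ k ≤ (8 * q) ^ 2 := by
  have h8 : 8 ≤ Nat.sqrt k := Nat.le_sqrt'.mpr hk
  obtain ⟨q, hq, hlt, hle⟩ := Nat.exists_prime_lt_and_le_two_mul (Nat.sqrt k / 8) (by omega)
  exact ⟨q, hq, Nat.le_sqrt'.mp (by omega), (Nat.sqrt_lt'.mp (by omega)).le⟩

lemma Real.rpow_three_halves_le {x y : ℝ} (hx : 0 ≤ x) (hy : 0 ≤ y) (h : x ≤ y ^ 2) :
    x ^ ((3 : ℝ) / 2) ≤ y ^ 3 :=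
  calc x ^ ((3 : ℝ) / 2) ≤ (y ^ 2) ^ ((3 : ℝ) / 2) := Real.rpow_le_rpow hx h (by norm_num)
    _ = y ^ 3 := by rw [← Real.rpow_natCast, ← Real.rpow_mul hy]; norm_num

lemma rpow_three_halves_div_sqrt_logb_le {k q d : ℕ} (hk : 2 ^ 2 ^ 20 ≤ k)
    (hkq : k ≤ (8 * q) ^ 2) (hq : 2 ≤ q) (hqd : q ^ 2 * (q - 1) ≤ 6 * d) :
    (k : ℝ) ^ ((3 : ℝ) / 2) / (8 * √(Real.logb 2 k)) ≤ d := by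
  have hq3 : q ^ 3 ≤ 12 * d := by
    have := Nat.mul_le_mul_left (q ^ 2) (show q ≤ 2 * (q - 1) by omega)
    nlinarith
  have hlog : ((2 ^ 20 : ℕ) : ℝ) ≤ Real.logb 2 k :=
    (Real.le_logb_iff_rpow_le one_lt_two (Nat.cast_pos.mpr ((Nat.two_pow_pos _).trans_le hk))).mpr
      (by rw [Real.rpow_natCast]; exact_mod_cast hk)
  have hsqrt : 1024 ≤ √(Real.logb 2 k) := Real.le_sqrt_of_sq_le (by push_cast at hlog; linarith)
  have hpow : (k : ℝ) ^ ((3 : ℝ) / 2) ≤ (8 * q) ^ 3 :=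
    Real.rpow_three_halves_le (by positivity) (by positivity) (by exact_mod_cast hkq)
  have hq3R : (q : ℝ) ^ 3 ≤ 12 * d := by exact_mod_cast hq3
  rw [div_le_iff₀ (by positivity)]
  nlinarith

/-- For all sufficiently large `k`, there is a digraph on the 2-element subsets of
`[k]` satisfying the triangular substructure property, all of whose dominating sets
have size at least `k^{3/2} / (8 √(log₂ k))`. -/
theorem stmt_10 :
    ∃ k0 : ℕ, ∀ k : ℕ, k0 ≤ k →
      ∃ E : Finset (Fin k) → Finset (Fin k) → Prop,
        (∀ a b c : Fin k, a ≠ b → a ≠ c → b ≠ c →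
          (E {a, c} {b, c} ∧ E {b, c} {a, c}) ∨ E {a, b} {a, c} ∨ E {a, b} {b, c}) ∧
        ∀ D : Finset (Finset (Fin k)),
          D ⊆ Finset.univ.filter (fun s : Finset (Fin k) => s.card = 2) →
          (∀ v : Finset (Fin k), v.card = 2 → v ∈ D ∨ ∃ u ∈ D, E u v) →
          (k : ℝ) ^ ((3 : ℝ) / 2) / (8 * Real.sqrt (Real.logb 2 k)) ≤ D.card := by
  refine ⟨2 ^ 2 ^ 20, fun k hk => ?_⟩
  obtain ⟨q, hq, hqk, hkq⟩ := exists_prime_sq_le_le_sq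
    ((Nat.pow_le_pow_right (n := 2) two_pos (by norm_num : 6 ≤ 2 ^ 20)).trans hk)
  have := Fact.mk hq
  classical
  let f : ZMod q × ZMod q ↪ Fin k := (Fintype.equivFin _).toEmbedding.trans
    (Fin.castLEEmb (by simpa [ZMod.card, sq] using hqk))
  let G := (affinePolarityGraph (ZMod q)).map f
  obtain ⟨r, hr, hr_top⟩ := exists_injective_rank_top (G.cliqueFinset 2)
  refine ⟨rankDigraph r, fun a b c hab hac hbc => Or.inr (rankDigraph_triangle hr hab hac hbc),
    fun D hD hdom => ?_⟩
  have hdomG : #(G.cliqueFinset 2) ≤ 3 * #D :=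
    card_cliqueFinset_two_le_three_mul_card
      (fun _ _ => commonNeighbors_map_subsingleton f
        fun _ _ => affinePolarityGraph.commonNeighbors_subsingleton) hr_top
      (fun u hu => (mem_filter.mp (hD hu)).2)
      fun e he heD => (hdom e (mem_cliqueFinset_iff.mp he).card_eq).resolve_left heD
  have hedges := affinePolarityGraph.two_mul_card_edgeFinset (F := ZMod q)
  rw [G.card_cliqueFinset_two, card_edgeFinset_map] at hdomG
  rw [ZMod.card] at hedges
  exact rpow_three_halves_div_sqrt_logb_le hk hkq hq.two_le (by omega)
end

section
/- Let G_k be constructed from a set R ⊆ V = {2-subsets of [k]} by adding, for every v = {a,b} and every i ∉ {a,b}: the edge {a,b} → {b,i} if {a,i} ∈ R and {b,i} ∉ R; the edge {a,b} → {a,i} if {a,i} ∉ R and {b,i} ∈ R; and one of {a,b} → {a,i} or {a,b} → {b,i} (arbitrarily) otherwise. Then any single vertex v = {a,b} dominates at most |I_v^R| + 1 elements of R, where I_v^R := {i ∈ [k]∖{a,b} : {a,i} ∈ R and {b,i} ∈ R}. Consequently any dominating set of G_k has size at least |R|/(max_v |I_v^R| + 1). -/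
open Classical in
/-- In the graph `G_k` constructed from `R`: every edge out of `{a,b}` goes to a set
`{b,i}` (up to swapping the roles of `a` and `b`) and is forbidden when
`{a,i} ∉ R` and `{b,i} ∈ R`, and for each `i` only one of the two candidate edges is
present. Then each vertex `{a,b}` dominates at most `|I_{a,b}^R| + 1` elements of `R`,
where `I_{a,b}^R = {i ∉ {a,b} : {a,i} ∈ R ∧ {b,i} ∈ R}`, and consequently any
dominating set has size at least `|R| / (M + 1)` where `M ≥ max_v |I_v^R|`. -/
theorem stmt_11 (k : ℕ) (R : Finset (Finset (Fin k)))
    (hR : ∀ s ∈ R, s.card = 2)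
    (E : Finset (Fin k) → Finset (Fin k) → Prop)
    (hE : ∀ s t, E s t → ∃ a b i : Fin k, a ≠ b ∧ i ≠ a ∧ i ≠ b ∧
      s = {a, b} ∧ t = {b, i} ∧
      (({a, i} : Finset (Fin k)) ∈ R ∨ ({b, i} : Finset (Fin k)) ∉ R))
    (hfun : ∀ a b i : Fin k, a ≠ b → i ≠ a → i ≠ b →
      ¬(E {a, b} {a, i} ∧ E {a, b} {b, i}))
    (M : ℕ)
    (hM : ∀ a b : Fin k, a ≠ b →
      (Finset.univ.filter (fun i : Fin k => i ≠ a ∧ i ≠ b ∧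
        ({a, i} : Finset (Fin k)) ∈ R ∧ ({b, i} : Finset (Fin k)) ∈ R)).card ≤ M) :
    (∀ a b : Fin k, a ≠ b →
      (R.filter (fun w => w = {a, b} ∨ E {a, b} w)).card ≤
        (Finset.univ.filter (fun i : Fin k => i ≠ a ∧ i ≠ b ∧
          ({a, i} : Finset (Fin k)) ∈ R ∧ ({b, i} : Finset (Fin k)) ∈ R)).card + 1) ∧
    ∀ D : Finset (Finset (Fin k)),
      D ⊆ Finset.univ.filter (fun s : Finset (Fin k) => s.card = 2) →
      (∀ v : Finset (Fin k), v.card = 2 → v ∈ D ∨ ∃ u ∈ D, E u v) →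
      (R.card : ℝ) / (M + 1) ≤ D.card := by
  have part1 : ∀ a b : Fin k, a ≠ b →
      (R.filter (fun w => w = {a, b} ∨ E {a, b} w)).card ≤
        (Finset.univ.filter (fun i : Fin k => i ≠ a ∧ i ≠ b ∧
          ({a, i} : Finset (Fin k)) ∈ R ∧ ({b, i} : Finset (Fin k)) ∈ R)).card + 1 := by
    intro a b hab
    set S := R.filter (fun w => w = {a, b} ∨ E {a, b} w) with hS
    set I := Finset.univ.filter (fun i : Fin k => i ≠ a ∧ i ≠ b ∧
          ({a, i} : Finset (Fin k)) ∈ R ∧ ({b, i} : Finset (Fin k)) ∈ R) with hI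
    -- every element of S.erase {a,b} is of the form {a,i} or {b,i} with i ∈ I
    have hEw : ∀ w ∈ S.erase {a, b}, E {a, b} w := by
      intro w hw
      have hwne := Finset.ne_of_mem_erase hw
      have hwS := Finset.mem_of_mem_erase hw
      rw [hS, Finset.mem_filter] at hwS
      rcases hwS.2 with h | h
      · exact absurd h hwne
      · exact h
    have key : ∀ w ∈ S.erase {a, b}, ∃ i, i ∈ I ∧ (w = {a, i} ∨ w = {b, i}) := by
      intro w hw
      have hwR : w ∈ R := Finset.mem_of_mem_filter _ (Finset.mem_of_mem_erase hw)
      obtain ⟨a', b', i, hab', hia', hib', hs, ht, hor⟩ := hE _ _ (hEw w hw)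
      have hbiR : ({b', i} : Finset (Fin k)) ∈ R := ht ▸ hwR
      have haiR : ({a', i} : Finset (Fin k)) ∈ R := by tauto
      have ha'mem : a' ∈ ({a, b} : Finset (Fin k)) := by
        rw [hs]; simp
      have hb'mem : b' ∈ ({a, b} : Finset (Fin k)) := by
        rw [hs]; simp
      simp only [Finset.mem_insert, Finset.mem_singleton] at ha'mem hb'mem
      rcases ha'mem with rfl | rfl
      · rcases hb'mem with rfl | rfl
        · exact absurd rfl hab'
        · refine ⟨i, ?_, Or.inr ht⟩
          rw [hI, Finset.mem_filter]
          exact ⟨Finset.mem_univ _, hia', hib', haiR, hbiR⟩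
      · rcases hb'mem with rfl | rfl
        · refine ⟨i, ?_, Or.inl ht⟩
          rw [hI, Finset.mem_filter]
          exact ⟨Finset.mem_univ _, hib', hia', hbiR, haiR⟩
        · exact absurd rfl hab'
    -- injection from S.erase {a,b} into I
    have card_erase : (S.erase {a, b}).card ≤ I.card := by
      classical
      set f : Finset (Fin k) → Fin k := fun w =>
        if h : ∃ i, i ∈ I ∧ (w = {a, i} ∨ w = {b, i}) then h.choose else a with hf
      apply Finset.card_le_card_of_injOn f
      · intro w hw
        have h := key w hw
        rw [hf]
        simp only [dif_pos h]
        exact h.choose_spec.1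
      · intro w1 hw1 w2 hw2 heq
        have h1 := key w1 hw1
        have h2 := key w2 hw2
        rw [hf] at heq
        simp only [dif_pos h1, dif_pos h2] at heq
        obtain ⟨hi1, hc1⟩ := h1.choose_spec
        obtain ⟨hi2, hc2⟩ := h2.choose_spec
        set i := h1.choose
        rw [← heq] at hc2
        rw [hI, Finset.mem_filter] at hi1
        obtain ⟨-, hia, hib, -, -⟩ := hi1
        rcases hc1 with h1' | h1' <;> rcases hc2 with h2' | h2'
        · rw [h1', h2']
        · exact absurd ⟨h1' ▸ hEw _ hw1, h2' ▸ hEw _ hw2⟩ (hfun a b i hab hia hib)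
        · exact absurd ⟨h2' ▸ hEw _ hw2, h1' ▸ hEw _ hw1⟩ (hfun a b i hab hia hib)
        · rw [h1', h2']
    calc S.card ≤ (insert ({a, b} : Finset (Fin k)) (S.erase {a, b})).card := by
          apply Finset.card_le_card
          rw [Finset.subset_insert_iff]
      _ ≤ (S.erase {a, b}).card + 1 := Finset.card_insert_le _ _
      _ ≤ I.card + 1 := by omega
  refine ⟨part1, ?_⟩
  intro D hD hdom
  have hsub : R ⊆ D.biUnion (fun u => R.filter (fun w => w = u ∨ E u w)) := by
    intro v hv
    rcases hdom v (hR v hv) with hvD | ⟨u, huD, hEu⟩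
    · exact Finset.mem_biUnion.2 ⟨v, hvD, Finset.mem_filter.2 ⟨hv, Or.inl rfl⟩⟩
    · exact Finset.mem_biUnion.2 ⟨u, huD, Finset.mem_filter.2 ⟨hv, Or.inr hEu⟩⟩
  have hcard : R.card ≤ D.card * (M + 1) := by
    calc R.card ≤ (D.biUnion (fun u => R.filter (fun w => w = u ∨ E u w))).card :=
          Finset.card_le_card hsub
      _ ≤ ∑ u ∈ D, (R.filter (fun w => w = u ∨ E u w)).card := Finset.card_biUnion_le
      _ ≤ ∑ _u ∈ D, (M + 1) := by
          apply Finset.sum_le_sum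
          intro u hu
          have hu2 : u.card = 2 := by
            have := hD hu
            rw [Finset.mem_filter] at this
            exact this.2
          obtain ⟨x, y, hxy, rfl⟩ := Finset.card_eq_two.1 hu2
          exact le_trans (part1 x y hxy) (Nat.add_le_add_right (hM x y hxy) 1)
      _ = D.card * (M + 1) := by rw [Finset.sum_const, smul_eq_mul]
  rw [div_le_iff₀ (by positivity)]
  exact_mod_cast hcard
end

section
/- Let R be a uniformly random subset of size ℓ = (1/4)k^{3/2}√(log k) of V = {2-subsets of [k]}. For a fixed vertex v = {a,b} and t = 2 log k, the probability that |I_v^R| ≥ t, where I_v^R := {i : {a,i} ∈ R and {b,i} ∈ R}, is at most C(k−2, t) · C(|V|−2t, ℓ−2t)/C(|V|, ℓ), which is at most 1/k² for k sufficiently large. -/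
/-!
A bad `R` contains all `2t` pairs `{a, i}`, `{b, i}` for `i` in some `t`-set `T` of common
neighbours of `a` and `b`, so a union bound over `T` gives `C(k-2, t) · C(|V|-2t, ℓ-2t)`.
Dividing by `C(|V|, ℓ)` and using `C(|V|-2t, ℓ-2t) / C(|V|, ℓ) = C(ℓ, 2t) / C(|V|, 2t)
≤ (ℓ/|V|)^{2t}` and `C(k-2, t) ≤ (e(k-2)/t)^t`, the bound becomes `β^t` with
`β = e(k-2)/t · (ℓ/|V|)² ≤ e log₂ k / (4t) ≤ e/8 < 1/2`, and `2^{-t} ≤ 1/k²` as `t ≥ 2 log₂ k`.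
-/

open Finset Real

namespace Nat

theorem descFactorial_mul_pow_le {l n : ℕ} (h : l ≤ n) (j : ℕ) :
    l.descFactorial j * n ^ j ≤ n.descFactorial j * l ^ j := by
  rw [descFactorial_eq_prod_range, descFactorial_eq_prod_range, ← card_range j, ← prod_const,
    ← prod_const, card_range, ← prod_mul_distrib, ← prod_mul_distrib]
  refine prod_le_prod' fun i _ => ?_
  rw [Nat.sub_mul, Nat.sub_mul, Nat.mul_comm n l]
  exact Nat.sub_le_sub_left (Nat.mul_le_mul_left i h) _

theorem choose_div_choose_le_pow {l n : ℕ} (h : l ≤ n) (j : ℕ) :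
    (l.choose j : ℝ) / n.choose j ≤ ((l : ℝ) / n) ^ j := by
  rcases lt_or_ge n j with hnj | hjn
  · simp only [choose_eq_zero_of_lt (h.trans_lt hnj), CharP.cast_eq_zero, zero_div]
    positivity
  rcases j.eq_zero_or_pos with rfl | hj
  · simp
  have hnat : l.choose j * n ^ j ≤ n.choose j * l ^ j := by
    have := descFactorial_mul_pow_le h j
    rw [descFactorial_eq_factorial_mul_choose, descFactorial_eq_factorial_mul_choose,
      Nat.mul_assoc, Nat.mul_assoc] at this
    exact Nat.le_of_mul_le_mul_left this j.factorial_pos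
  have hn : 0 < n := hj.trans_le hjn
  rw [div_pow, div_le_div_iff₀ (mod_cast choose_pos hjn) (by positivity),
    mul_comm _ ((n.choose j : ℕ) : ℝ)]
  exact_mod_cast hnat

theorem choose_sub_div_choose_le_pow {s l : ℕ} (hs : s ≤ l) (n : ℕ) :
    ((n - s).choose (l - s) : ℝ) / n.choose l ≤ ((l : ℝ) / n) ^ s := by
  rcases lt_or_ge n l with hnl | hln
  · simp only [choose_eq_zero_of_lt hnl, CharP.cast_eq_zero, div_zero]
    positivity
  have hn : (0 : ℝ) < n.choose l := mod_cast choose_pos hln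
  have hmul : (n.choose l * l.choose s : ℝ) = n.choose s * (n - s).choose (l - s) :=
    mod_cast choose_mul hs
  calc ((n - s).choose (l - s) : ℝ) / n.choose l = l.choose s / n.choose s := by
        rw [div_eq_div_iff hn.ne' (mod_cast (choose_pos (hs.trans hln)).ne')]; linarith
    _ ≤ ((l : ℝ) / n) ^ s := choose_div_choose_le_pow hln s

theorem choose_le_exp_mul_div_pow (n t : ℕ) :
    (n.choose t : ℝ) ≤ (exp 1 * n / t) ^ t := by
  rcases t.eq_zero_or_pos with rfl | ht
  · simp
  have hfac : (t : ℝ) ^ t ≤ exp 1 ^ t * t.factorial := by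
    rw [exp_one_pow, ← div_le_iff₀ (by positivity)]
    exact pow_div_factorial_le_exp _ (by positivity) t
  calc (n.choose t : ℝ) ≤ (n : ℝ) ^ t / t.factorial := choose_le_pow_div t n
    _ ≤ (exp 1 * n / t) ^ t := by
      rw [div_pow, mul_pow, div_le_div_iff₀ (by positivity) (by positivity)]
      nlinarith [pow_nonneg (Nat.cast_nonneg (α := ℝ) n) t]

end Nat

section

variable {α ι : Type*} [DecidableEq α]

theorem Finset.card_filter_exists_subset_le (V : Finset α) (I : Finset ι) (E : ι → Finset α)
    {m ℓ : ℕ} (hEV : ∀ i ∈ I, E i ⊆ V) (hE : ∀ i ∈ I, #(E i) = m) :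
    #((V.powersetCard ℓ).filter fun R => ∃ i ∈ I, E i ⊆ R) ≤ #I * (#V - m).choose (ℓ - m) := by
  calc _ ≤ #(I.biUnion fun i => ((V \ E i).powersetCard (ℓ - m)).image (· ∪ E i)) := by
        refine card_le_card fun R hR => ?_
        obtain ⟨hR, i, hi, hER⟩ := mem_filter.1 hR
        obtain ⟨hRV, hRcard⟩ := mem_powersetCard.1 hR
        refine mem_biUnion.2 ⟨i, hi, mem_image.2 ⟨R \ E i, mem_powersetCard.2 ⟨?_, ?_⟩, ?_⟩⟩
        · exact sdiff_subset_sdiff hRV le_rfl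
        · rw [card_sdiff_of_subset hER, hRcard, hE i hi]
        · exact sdiff_union_of_subset hER
    _ ≤ ∑ i ∈ I, #(((V \ E i).powersetCard (ℓ - m)).image (· ∪ E i)) := card_biUnion_le
    _ ≤ ∑ _i ∈ I, (#V - m).choose (ℓ - m) := sum_le_sum fun i hi => card_image_le.trans_eq <| by
        rw [card_powersetCard, card_sdiff_of_subset (hEV i hi), hE i hi]
    _ = #I * (#V - m).choose (ℓ - m) := by rw [sum_const, smul_eq_mul]

def crossPairs (S T : Finset α) : Finset (Finset α) :=
  (S ×ˢ T).image fun p => {p.1, p.2}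

variable {S T : Finset α}

theorem crossPairs_subset_iff {R : Finset (Finset α)} :
    crossPairs S T ⊆ R ↔ ∀ x ∈ S, ∀ y ∈ T, {x, y} ∈ R := by
  simp only [crossPairs, image_subset_iff, mem_product, and_imp, Prod.forall]
  exact forall_congr' fun x => by tauto

theorem card_eq_two_of_mem_crossPairs (h : Disjoint S T) {s : Finset α}
    (hs : s ∈ crossPairs S T) : #s = 2 := by
  obtain ⟨⟨x, y⟩, hxy, rfl⟩ := mem_image.1 hs
  obtain ⟨hx, hy⟩ := mem_product.1 hxy
  exact card_pair (disjoint_left.1 h hx <| · ▸ hy)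

theorem card_crossPairs (h : Disjoint S T) : #(crossPairs S T) = #S * #T := by
  rw [crossPairs, card_image_of_injOn, card_product]
  rintro ⟨x, y⟩ hxy ⟨x', y'⟩ hxy' (heq : ({x, y} : Finset α) = {x', y'})
  simp only [coe_product, Set.mem_prod, mem_coe] at hxy hxy'
  have hST : ∀ u ∈ S, ∀ v ∈ T, u ≠ v := fun u hu v hv huv => disjoint_left.1 h hu (huv ▸ hv)
  have hx : x ∈ ({x', y'} : Finset α) := heq ▸ mem_insert_self x {y}
  have hy : y ∈ ({x', y'} : Finset α) := heq ▸ mem_insert_of_mem (mem_singleton_self y)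
  simp only [mem_insert, mem_singleton] at hx hy
  grind

end

section

variable {α : Type*} [Fintype α] [DecidableEq α]

-- `I_v^R` for `v = {a, b}`
def commonNbrs (R : Finset (Finset α)) (a b : α) : Finset α :=
  univ.filter fun i => i ≠ a ∧ i ≠ b ∧ {a, i} ∈ R ∧ {b, i} ∈ R

theorem card_filter_le_card_commonNbrs_le {a b : α} (hab : a ≠ b) (ℓ t : ℕ) :
    #(((univ.filter fun s : Finset α => #s = 2).powersetCard ℓ).filter
        fun R => t ≤ #(commonNbrs R a b)) ≤
      (Fintype.card α - 2).choose t *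
        (#(univ.filter fun s : Finset α => #s = 2) - 2 * t).choose (ℓ - 2 * t) := by
  have hdisj : ∀ T ∈ ({a, b}ᶜ : Finset α).powersetCard t, Disjoint {a, b} T := fun T hT =>
    subset_compl_iff_disjoint_left.1 (mem_powersetCard.1 hT).1
  refine (card_le_card fun R hR => ?_).trans <|
    (card_filter_exists_subset_le _ _ (crossPairs {a, b})
      (fun T hT s hs => mem_filter.2 ⟨mem_univ s, card_eq_two_of_mem_crossPairs (hdisj T hT) hs⟩)
      (fun T hT => by rw [card_crossPairs (hdisj T hT), card_pair hab, (mem_powersetCard.1 hT).2])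
    ).trans_eq (by rw [card_powersetCard, card_compl, card_pair hab])
  obtain ⟨hR, hRt⟩ := mem_filter.1 hR
  obtain ⟨T, hT, hTcard⟩ := exists_subset_card_eq hRt
  refine mem_filter.2 ⟨hR, T, mem_powersetCard.2 ⟨fun i hi => ?_, hTcard⟩, ?_⟩
  · have := (mem_filter.1 (hT hi)).2
    simp [this.1, this.2.1]
  · refine crossPairs_subset_iff.2 fun x hx i hi => ?_
    have := (mem_filter.1 (hT hi)).2
    rcases mem_insert.1 hx with rfl | hx
    · exact this.2.2.1
    · exact mem_singleton.1 hx ▸ this.2.2.2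

end

theorem sq_le_two_pow_of_two_mul_logb_le {x : ℝ} (hx : 0 < x) {t : ℕ}
    (ht : 2 * logb 2 x ≤ t) : x ^ 2 ≤ 2 ^ t := by
  have h : logb 2 (x ^ 2) ≤ t := by rw [logb_pow]; push_cast; exact ht
  rwa [logb_le_iff_le_rpow one_lt_two (by positivity), rpow_natCast] at h

theorem exp_one_mul_div_mul_div_choose_two_sq_le_half {k ℓ t : ℕ} (hk : 2 ≤ k)
    (hℓ : (ℓ : ℝ) ≤ 1 / 4 * (k : ℝ) ^ ((3 : ℝ) / 2) * √(logb 2 k))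
    (ht : 2 * logb 2 k ≤ (t : ℝ)) :
    exp 1 * ((k : ℝ) - 2) / t * ((ℓ : ℝ) / k.choose 2) ^ 2 ≤ 1 / 2 := by
  set L := logb 2 (k : ℝ)
  have hk2 : (2 : ℝ) ≤ k := mod_cast hk
  have hL : 1 ≤ L := by
    rw [le_logb_iff_rpow_le one_lt_two (by positivity)]
    simpa using hk2
  have ht0 : (0 : ℝ) < t := by linarith
  have hℓsq : (ℓ : ℝ) ^ 2 ≤ k ^ 3 * L / 16 := by
    calc (ℓ : ℝ) ^ 2 ≤ (1 / 4 * (k : ℝ) ^ ((3 : ℝ) / 2) * √L) ^ 2 :=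
          pow_le_pow_left₀ (by positivity) hℓ 2
      _ = k ^ 3 * L / 16 := by
          have hk3 : ((k : ℝ) ^ ((3 : ℝ) / 2)) ^ 2 = k ^ 3 := by
            rw [← rpow_natCast, ← rpow_mul (by positivity)]
            norm_num
          rw [mul_pow, mul_pow, sq_sqrt (by linarith), hk3]
          ring
  have he : exp 1 * L / 4 ≤ t / 2 := by nlinarith [exp_one_lt_d9]
  have hkk : ((k : ℝ) - 2) * k ≤ (k - 1) ^ 2 := by nlinarith
  have key : exp 1 * (k - 2) * ℓ ^ 2 * 4 ≤ 1 / 2 * (t * (k ^ 2 * (k - 1) ^ 2)) := by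
    calc exp 1 * (k - 2) * ℓ ^ 2 * 4 ≤ exp 1 * (k - 2) * (k ^ 3 * L / 16) * 4 := by
          gcongr
      _ = exp 1 * L / 4 * ((k - 2) * k) * k ^ 2 := by ring
      _ ≤ t / 2 * (k - 1) ^ 2 * k ^ 2 := by gcongr
      _ = 1 / 2 * (t * (k ^ 2 * (k - 1) ^ 2)) := by ring
  calc exp 1 * ((k : ℝ) - 2) / t * ((ℓ : ℝ) / k.choose 2) ^ 2
      = exp 1 * (k - 2) * ℓ ^ 2 * 4 / (t * (k ^ 2 * (k - 1) ^ 2)) := by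
        rw [Nat.cast_choose_two]
        field_simp
        ring
    _ ≤ 1 / 2 := by
        rw [div_le_iff₀ (mul_pos ht0 (by nlinarith))]
        exact key

open Classical in
/-- Let `V` be the 2-element subsets of `[k]`, `ℓ ≤ (1/4) k^{3/2} √(log₂ k)` and
`t ≥ 2 log₂ k` with `2t ≤ ℓ`. For a fixed vertex `{a,b}`, the probability over a
uniformly random `ℓ`-subset `R` of `V` that `|I_{a,b}^R| ≥ t` is at most
`C(k-2, t) · C(|V|-2t, ℓ-2t) / C(|V|, ℓ)`, which is at most `1/k²` for `k`
sufficiently large. -/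
theorem stmt_12 :
    ∃ k0 : ℕ, ∀ k : ℕ, k0 ≤ k → ∀ ℓ t : ℕ, ∀ a b : Fin k, a ≠ b →
      (ℓ : ℝ) ≤ (1 / 4) * (k : ℝ) ^ ((3 : ℝ) / 2) * Real.sqrt (Real.logb 2 k) →
      2 * Real.logb 2 k ≤ (t : ℝ) →
      2 * t ≤ ℓ →
      let V := Finset.univ.filter (fun s : Finset (Fin k) => s.card = 2)
      let bad := (V.powersetCard ℓ).filter (fun R =>
        t ≤ (Finset.univ.filter (fun i : Fin k => i ≠ a ∧ i ≠ b ∧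
          ({a, i} : Finset (Fin k)) ∈ R ∧ ({b, i} : Finset (Fin k)) ∈ R)).card)
      (bad.card : ℝ) / (V.card.choose ℓ) ≤
          (((k - 2).choose t * (V.card - 2 * t).choose (ℓ - 2 * t) : ℕ) : ℝ) /
            (V.card.choose ℓ) ∧
        (((k - 2).choose t * (V.card - 2 * t).choose (ℓ - 2 * t) : ℕ) : ℝ) /
            (V.card.choose ℓ) ≤ 1 / k ^ 2 := by
  refine ⟨2, fun k hk ℓ t a b hab hℓ ht h2t => ?_⟩
  intro V bad
  constructor
  · gcongr
    have h := card_filter_le_card_commonNbrs_le hab ℓ t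
    rwa [Fintype.card_fin] at h
  have hV : #V = k.choose 2 := by simp [V]
  rw [hV, Nat.cast_mul, mul_div_assoc]
  calc ((k - 2).choose t : ℝ) * ((k.choose 2 - 2 * t).choose (ℓ - 2 * t) / (k.choose 2).choose ℓ)
      ≤ (exp 1 * (k - 2 : ℕ) / t) ^ t * ((ℓ : ℝ) / k.choose 2) ^ (2 * t) :=
        mul_le_mul (Nat.choose_le_exp_mul_div_pow _ _) (Nat.choose_sub_div_choose_le_pow h2t _)
          (by positivity) (by positivity)
    _ = (exp 1 * (k - 2 : ℕ) / t * ((ℓ : ℝ) / k.choose 2) ^ 2) ^ t := by rw [pow_mul, ← mul_pow]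
    _ ≤ (1 / 2) ^ t := by
        refine pow_le_pow_left₀ (by positivity) ?_ t
        rw [Nat.cast_sub hk, Nat.cast_two]
        exact exp_one_mul_div_mul_div_choose_two_sq_le_half hk hℓ ht
    _ ≤ 1 / k ^ 2 := by
        rw [one_div_pow, one_div_le_one_div (by positivity) (by positivity)]
        exact sq_le_two_pow_of_two_mul_logb_le (by positivity) ht
end

section
/- The flattening conjecture is false: for every n > 4 that is a power of 2, there exist 2n probability distributions q_1,...,q_{2n} on [n], pairwise separated in ℓ1-distance by at most 2, such that for every left-stochastic matrix φ ∈ ℝ^{m×n} with the property that every entry of each φq_j lies in [0, 2/m], there exist indices j ≠ j' with ‖φq_j − φq_{j'}‖₁ ≤ 2/√n but ‖q_j − q_{j'}‖₁ ≥ 1. Concretely, one may take the point masses e_1,...,e_n together with f_1 := 1/n (uniform) and f_j := column j of the Hadamard matrix H with −1 replaced by 0 and +1 replaced by 2/n (for j = 2,...,n). -/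
/-!
Let `n = 2 ^ d` and let `H` be a Sylvester–Hadamard matrix with an all-ones row `z₀`. The point
masses force every entry of `φ` to be at most `2/m`, so `‖φ‖_F² ≤ 2n/m`. Orthogonality of the
columns of `H` gives `∑_z ‖φ H_z‖₂² = n ‖φ‖_F² ≤ 2n²/m`; averaging over the `n - 1` rows `z ≠ z₀`
and applying Cauchy–Schwarz yields some `z` with `‖φ H_z‖₁ ≤ 2√n`. Since `f_z - f_{z₀} = H_z / n`
with `|H_z| ≡ 1`, the pair `f_z, f_{z₀}` is at ℓ1-distance exactly `1`, while
`‖φ f_z - φ f_{z₀}‖₁ ≤ 2/√n`.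
-/

open Finset Matrix
open scoped Kronecker

section Stochastic

variable {κ ι : Type*} [Fintype κ] [Fintype ι]

theorem sum_abs_sub_le_two {p q : ι → ℝ} (hp : ∀ x, 0 ≤ p x) (hq : ∀ x, 0 ≤ q x)
    (hp₁ : ∑ x, p x = 1) (hq₁ : ∑ x, q x = 1) : ∑ x, |p x - q x| ≤ 2 := by
  calc ∑ x, |p x - q x| ≤ ∑ x, (p x + q x) :=
        sum_le_sum fun x _ => abs_sub_le_iff.mpr ⟨by linarith [hq x], by linarith [hp x]⟩
    _ = 2 := by rw [sum_add_distrib, hp₁, hq₁]; norm_num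

theorem sum_sum_sq_le_of_le {φ : Matrix κ ι ℝ} {c : ℝ} (h₀ : ∀ i x, 0 ≤ φ i x)
    (hc : ∀ i x, φ i x ≤ c) (hcol : ∀ x, ∑ i, φ i x = 1) :
    ∑ i, ∑ x, φ i x ^ 2 ≤ c * Fintype.card ι := by
  calc ∑ i, ∑ x, φ i x ^ 2 ≤ ∑ i, ∑ x, c * φ i x :=
        sum_le_sum fun i _ => sum_le_sum fun x _ => by
          rw [sq]; exact mul_le_mul_of_nonneg_right (hc i x) (h₀ i x)
    _ = c * Fintype.card ι := by
      rw [sum_comm]; simp [← mul_sum, hcol, mul_comm]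

end Stochastic

namespace Matrix.IsHadamard

variable {κ ι : Type*} [Fintype κ] [Fintype ι] [DecidableEq ι] {H : Matrix ι ι ℝ}

theorem abs_apply (hH : H.IsHadamard) (i j : ι) : |H i j| = 1 := by
  rcases Unitary.mem_iff_eq_one_or_eq_neg_one.mp (hH.apply_mem i j) with h | h <;> simp [h]

theorem neg_one_le_apply (hH : H.IsHadamard) (i j : ι) : -1 ≤ H i j :=
  neg_le_of_abs_le (hH.abs_apply i j).le

theorem sum_mulVec_sq (hH : H.IsHadamard) (a : ι → ℝ) :
    ∑ z, (H *ᵥ a) z ^ 2 = Fintype.card ι * ∑ x, a x ^ 2 := by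
  have hHH : Hᵀ * H = (Fintype.card ι : ℝ) • 1 := by
    simpa [conjTranspose_eq_transpose_of_trivial] using hH.conjTranspose_mul
  calc ∑ z, (H *ᵥ a) z ^ 2 = (H *ᵥ a) ⬝ᵥ (H *ᵥ a) := by simp [dotProduct, sq]
    _ = a ⬝ᵥ ((Hᵀ * H) *ᵥ a) := by
      rw [dotProduct_mulVec, ← vecMul_transpose, vecMul_vecMul, ← dotProduct_mulVec]
    _ = Fintype.card ι * ∑ x, a x ^ 2 := by
      simp [hHH, smul_mulVec, dotProduct, sq, Finset.mul_sum, mul_left_comm]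

theorem sum_row_eq_zero (hH : H.IsHadamard) {z₀ z : ι} (hz₀ : ∀ x, H z₀ x = 1) (hz : z ≠ z₀) :
    ∑ x, H z x = 0 := by
  simpa [mul_apply, hz₀, hz] using congr_fun (congr_fun hH.mul_conjTranspose z) z₀


theorem exists_ne_mul_sum_mulVec_sq_le (hH : H.IsHadamard) [Nontrivial ι] (z₀ : ι)
    (φ : Matrix κ ι ℝ) : ∃ z ≠ z₀,
      (Fintype.card ι - 1) * ∑ i, (φ *ᵥ H z) i ^ 2 ≤ Fintype.card ι * ∑ i, ∑ x, φ i x ^ 2 := by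
  set g : ι → ℝ := fun z => ∑ i, (φ *ᵥ H z) i ^ 2
  have parseval : ∑ z, g z = Fintype.card ι * ∑ i, ∑ x, φ i x ^ 2 := by
    have hrow : ∀ z i, (φ *ᵥ H z) i = (H *ᵥ φ i) z := fun z i => dotProduct_comm _ _
    simp only [g, hrow]
    rw [sum_comm, mul_sum]
    exact sum_congr rfl fun i _ => hH.sum_mulVec_sq (φ i)
  obtain ⟨z, hz, hmin⟩ := (univ.erase z₀).exists_min_image g
    ⟨_, mem_erase.mpr ⟨(exists_ne z₀).choose_spec, mem_univ _⟩⟩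
  refine ⟨z, (mem_erase.mp hz).1, ?_⟩
  calc (Fintype.card ι - 1) * g z = #(univ.erase z₀) • g z := by
        rw [card_erase_of_mem (mem_univ _), nsmul_eq_mul, card_univ,
          Nat.cast_sub Fintype.card_pos]; simp
    _ ≤ ∑ z ∈ univ.erase z₀, g z := card_nsmul_le_sum _ _ _ hmin
    _ ≤ ∑ z, g z := sum_le_sum_of_subset_of_nonneg (subset_univ _) fun _ _ _ => by positivity
    _ = _ := parseval

theorem exists_ne_sum_abs_mulVec_le (hH : H.IsHadamard) [Nontrivial ι] (z₀ : ι)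
    {φ : Matrix κ ι ℝ} (h₀ : ∀ i x, 0 ≤ φ i x) (hle : ∀ i x, φ i x ≤ 2 / Fintype.card κ)
    (hcol : ∀ x, ∑ i, φ i x = 1) :
    ∃ z ≠ z₀, ∑ i, |(φ *ᵥ H z) i| ≤ 2 * √(Fintype.card ι) := by
  obtain ⟨z, hz, hsq⟩ := hH.exists_ne_mul_sum_mulVec_sq_le z₀ φ
  have frobenius := sum_sum_sq_le_of_le h₀ hle hcol
  have hn : (2 : ℝ) ≤ Fintype.card ι := by exact_mod_cast Fintype.one_lt_card (α := ι)
  refine ⟨z, hz, ?_⟩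
  set n : ℝ := (Fintype.card ι : ℝ)
  set m : ℝ := (Fintype.card κ : ℝ)
  set v := φ *ᵥ H z
  have hm : m * (2 / m) ≤ 2 := by
    rcases eq_or_ne m 0 with h | h
    · simp [h]
    · rw [mul_div_cancel₀ _ h]
  have cauchySchwarz : (∑ i, |v i|) ^ 2 ≤ m * ∑ i, v i ^ 2 := by
    simpa [sq_abs] using sq_sum_le_card_mul_sum_sq (s := univ) (f := fun i => |v i|)
  have key : (∑ i, |v i|) ^ 2 ≤ 4 * n := by
    refine le_of_mul_le_mul_left ?_ (by linarith : 0 < n - 1)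
    calc (n - 1) * (∑ i, |v i|) ^ 2 ≤ (n - 1) * (m * ∑ i, v i ^ 2) :=
          mul_le_mul_of_nonneg_left cauchySchwarz (by linarith)
      _ = m * ((n - 1) * ∑ i, v i ^ 2) := by ring
      _ ≤ m * (n * (2 / m * n)) := by gcongr _ * ?_; exact hsq.trans (by gcongr)
      _ = n ^ 2 * (m * (2 / m)) := by ring
      _ ≤ n ^ 2 * 2 := by gcongr
      _ ≤ (n - 1) * (4 * n) := by nlinarith
  calc ∑ i, |v i| ≤ √(4 * n) := Real.le_sqrt_of_sq_le key
    _ = 2 * √n := by rw [Real.sqrt_mul (by norm_num), show (4 : ℝ) = 2 ^ 2 by norm_num,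
      Real.sqrt_sq (by norm_num)]

end Matrix.IsHadamard

def sylvesterTwo : Matrix (Fin 2) (Fin 2) ℝ := !![1, 1; 1, -1]

theorem isHadamard_sylvesterTwo : sylvesterTwo.IsHadamard := by
  refine ⟨fun i j => ?_, ?_, ?_⟩
  · fin_cases i <;> fin_cases j <;> simp [sylvesterTwo, Unitary.mem_iff_eq_one_or_eq_neg_one]
  all_goals
    ext i j
    fin_cases i <;> fin_cases j <;> simp [sylvesterTwo, mul_apply, Fin.sum_univ_two, one_add_one_eq_two]

theorem exists_isHadamard_two_pow (d : ℕ) :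
    ∃ (H : Matrix (Fin (2 ^ d)) (Fin (2 ^ d)) ℝ) (z₀ : Fin (2 ^ d)),
      H.IsHadamard ∧ ∀ x, H z₀ x = 1 := by
  induction d with
  | zero =>
    show ∃ (H : Matrix (Fin 1) (Fin 1) ℝ) (z₀ : Fin 1), H.IsHadamard ∧ ∀ x, H z₀ x = 1
    refine ⟨of fun _ _ => 1, 0, ⟨fun i j => ?_, ?_, ?_⟩, fun x => rfl⟩
    · simp
    all_goals ext i j; simp [mul_apply, Subsingleton.elim i j]
  | succ d ih =>
    obtain ⟨H, z₀, hH, hz₀⟩ := ih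
    let e : Fin (2 ^ d) × Fin 2 ≃ Fin (2 ^ (d + 1)) :=
      finProdFinEquiv.trans (finCongr (pow_succ 2 d).symm)
    refine ⟨reindex e e (H ⊗ₖ sylvesterTwo), e (z₀, 0),
      (hH.kronecker isHadamard_sylvesterTwo).reindex e e, fun x => ?_⟩
    obtain ⟨⟨y, j⟩, rfl⟩ := e.surjective x
    fin_cases j <;> simp [hz₀, sylvesterTwo]

section HadamardDist

variable {κ ι : Type*} [Fintype κ] [Fintype ι] [DecidableEq ι] {H : Matrix ι ι ℝ} {z₀ z : ι}

/-- The paper's `f_z`: uniform for the all-ones row `z₀`, otherwise the row `H z` with `-1 ↦ 0`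
and `1 ↦ 2/n`. -/
noncomputable def hadamardDist (H : Matrix ι ι ℝ) (z₀ z : ι) (x : ι) : ℝ :=
  if z = z₀ then (Fintype.card ι : ℝ)⁻¹ else (1 + H z x) / Fintype.card ι

theorem hadamardDist_nonneg (hH : H.IsHadamard) (x : ι) : 0 ≤ hadamardDist H z₀ z x := by
  unfold hadamardDist
  split_ifs
  · positivity
  · exact div_nonneg (by linarith [hH.neg_one_le_apply z x]) (Nat.cast_nonneg _)

theorem sum_hadamardDist (hH : H.IsHadamard) (hz₀ : ∀ x, H z₀ x = 1) :
    ∑ x, hadamardDist H z₀ z x = 1 := by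
  have hn : (Fintype.card ι : ℝ) ≠ 0 := Nat.cast_ne_zero.mpr (Fintype.card_pos_iff.mpr ⟨z₀⟩).ne'
  unfold hadamardDist
  split_ifs with hz
  · simp [hn]
  · rw [← sum_div, sum_add_distrib, hH.sum_row_eq_zero hz₀ hz]
    simp [hn]

theorem hadamardDist_sub_self (hz : z ≠ z₀) :
    hadamardDist H z₀ z - hadamardDist H z₀ z₀ = (Fintype.card ι : ℝ)⁻¹ • H z := by
  ext x
  simp only [Pi.sub_apply, hadamardDist, hz, ↓reduceIte, Pi.smul_apply, smul_eq_mul]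
  ring

theorem sum_abs_hadamardDist_sub_self (hH : H.IsHadamard) (hz : z ≠ z₀) :
    ∑ x, |hadamardDist H z₀ z x - hadamardDist H z₀ z₀ x| = 1 := by
  have hn : (Fintype.card ι : ℝ) ≠ 0 := Nat.cast_ne_zero.mpr (Fintype.card_pos_iff.mpr ⟨z₀⟩).ne'
  simp_rw [← Pi.sub_apply, hadamardDist_sub_self hz, Pi.smul_apply, smul_eq_mul, abs_mul,
    hH.abs_apply]
  simp [hn]

theorem Matrix.IsHadamard.exists_ne_sum_abs_mulVec_hadamardDist_sub_le (hH : H.IsHadamard)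
    [Nontrivial ι] (z₀ : ι) {φ : Matrix κ ι ℝ} (h₀ : ∀ i x, 0 ≤ φ i x)
    (hle : ∀ i x, φ i x ≤ 2 / Fintype.card κ) (hcol : ∀ x, ∑ i, φ i x = 1) :
    ∃ z ≠ z₀, ∑ i, |(φ *ᵥ hadamardDist H z₀ z) i - (φ *ᵥ hadamardDist H z₀ z₀) i|
      ≤ 2 / √(Fintype.card ι) := by
  obtain ⟨z, hz, hφz⟩ := hH.exists_ne_sum_abs_mulVec_le z₀ h₀ hle hcol
  refine ⟨z, hz, ?_⟩
  simp_rw [← Pi.sub_apply, ← mulVec_sub, hadamardDist_sub_self hz, mulVec_smul, Pi.smul_apply,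
    smul_eq_mul, abs_mul, ← mul_sum]
  calc _ ≤ |(Fintype.card ι : ℝ)⁻¹| * (2 * √(Fintype.card ι)) := by gcongr
    _ = 2 / √(Fintype.card ι) := by
      rw [abs_inv, Nat.abs_cast, ← Real.div_sqrt]
      field_simp
      exact (Real.sq_sqrt (Nat.cast_nonneg _)).symm

end HadamardDist

/-- The flattening conjecture is false: for every power of two `n > 4` there are
`2n` probability distributions on `[n]`, pairwise at ℓ1-distance at most `2`, such
that for every left-stochastic `φ ∈ ℝ^{m×n}` whose pushforwards `φ q_j` all have
entries in `[0, 2/m]`, some pair `j ≠ j'` satisfies `‖φ q_j - φ q_{j'}‖₁ ≤ 2/√n`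
although `‖q_j - q_{j'}‖₁ ≥ 1`. -/
theorem stmt_18 (n : ℕ) (hpow : ∃ d : ℕ, n = 2 ^ d) (hn : 4 < n) :
    ∃ q : Fin (2 * n) → Fin n → ℝ,
      (∀ j, (∀ x, 0 ≤ q j x) ∧ ∑ x, q j x = 1) ∧
      (∀ j j', ∑ x, |q j x - q j' x| ≤ 2) ∧
      ∀ m : ℕ, 0 < m → ∀ φ : Matrix (Fin m) (Fin n) ℝ,
        (∀ i j, 0 ≤ φ i j) → (∀ j, ∑ i, φ i j = 1) →
        (∀ j : Fin (2 * n), ∀ i, φ.mulVec (q j) i ∈ Set.Icc (0 : ℝ) (2 / m)) →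
        ∃ j j' : Fin (2 * n), j ≠ j' ∧
          (∑ i, |φ.mulVec (q j) i - φ.mulVec (q j') i| ≤ 2 / Real.sqrt n) ∧
          1 ≤ ∑ x, |q j x - q j' x| := by
  obtain ⟨H, z₀, hH, hz₀⟩ :
      ∃ (H : Matrix (Fin n) (Fin n) ℝ) (z₀ : Fin n), H.IsHadamard ∧ ∀ x, H z₀ x = 1 := by
    obtain ⟨d, rfl⟩ := hpow
    exact exists_isHadamard_two_pow d
  have : Nontrivial (Fin n) := Fin.nontrivial_iff_two_le.mpr (by omega)
  let Q : Fin n ⊕ Fin n → Fin n → ℝ := Sum.elim (fun x => Pi.single x 1) (hadamardDist H z₀)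
  have hQ : ∀ a, (∀ x, 0 ≤ Q a x) ∧ ∑ x, Q a x = 1
    | .inl y => ⟨fun x => by by_cases h : x = y <;> simp [Q, h], by simp [Q]⟩
    | .inr z => ⟨hadamardDist_nonneg hH, sum_hadamardDist hH hz₀⟩
  let σ : Fin (2 * n) ≃ Fin n ⊕ Fin n := (finCongr (two_mul n)).trans finSumFinEquiv.symm
  refine ⟨Q ∘ σ, fun j => hQ (σ j), fun j j' => sum_abs_sub_le_two (hQ _).1 (hQ _).1 (hQ _).2
    (hQ _).2, fun m _ φ h₀ hcol hrange => ?_⟩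
  have hle : ∀ i x, φ i x ≤ 2 / Fintype.card (Fin m) := fun i x => by
    simpa [Q, mulVec_single_one] using (hrange (σ.symm (.inl x)) i).2
  obtain ⟨z, hz, hclose⟩ := hH.exists_ne_sum_abs_mulVec_hadamardDist_sub_le z₀ h₀ hle hcol
  refine ⟨σ.symm (.inr z), σ.symm (.inr z₀), by simpa using hz, ?_, ?_⟩
  · simpa [Q] using hclose
  · simp [Q, sum_abs_hadamardDist_sub_self hH hz]
end

section
/- Let φ ∈ ℝ^{m×n} have all entries in [0, 2/m], and let f_1,...,f_n ∈ ℝ^n be vectors such that the matrix n·(f_1, f_2−f_1, ..., f_n−f_1) equals the n×n Hadamard matrix H. If n > 4, then there exists an index i with 1 < i ≤ n such that ‖φ(f_i − f_1)‖₁ ≤ 2/√n. -/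
/-!
Up to the factor `n`, the columns `i ≠ 1` of `φH` are the vectors `φ(f_i - f_1)`, and column `1`
holds the row sums `s_r` of `φ`. Since `HHᵀ = nI`, the squared Frobenius norm of `φH` is
`n‖φ‖_F²`. The entry bound `0 ≤ φ ≤ 2/m` gives `m‖φ‖_F² ≤ 2T` with `T = ∑ s_r`, and Cauchy–Schwarz
gives `T² ≤ m ∑ s_r²`, so the columns `i ≠ 1` carry at most `(2nT - T²)/m ≤ n²/m`. Averaging over
these `n - 1` columns yields one with `m‖φ(f_i - f_1)‖₂² ≤ 1/(n - 1) ≤ 4/n`, and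
`‖x‖₁ ≤ √m ‖x‖₂` concludes.
-/

/-- The `n × n` Hadamard matrix, `H i j = (-1)^{⟨i, j⟩ mod 2}` where `i, j` are
viewed as binary strings (intended for `n` a power of two). -/
noncomputable def hadamard (n : ℕ) : Matrix (Fin n) (Fin n) ℝ := fun i j =>
  (-1 : ℝ) ^ ((Finset.range n).filter (fun b => i.val.testBit b ∧ j.val.testBit b)).card

open Finset
open scoped Matrix

lemma hadamard_eq_prod (n : ℕ) (x y : Fin n) :
    hadamard n x y =
      ∏ b ∈ range n, if x.val.testBit b ∧ y.val.testBit b then (-1 : ℝ) else 1 := by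
  rw [prod_ite, prod_const, prod_const, one_pow, mul_one]
  rfl

lemma hadamard_comm (n : ℕ) (x y : Fin n) : hadamard n x y = hadamard n y x := by
  simp only [hadamard, and_comm]

lemma hadamard_zero_right (n : ℕ) (h : 0 < n) (x : Fin n) : hadamard n x ⟨0, h⟩ = 1 := by
  simp [hadamard]

lemma hadamard_xor_left (d : ℕ) (x y z : Fin (2 ^ d)) :
    hadamard (2 ^ d) (x ^^^ y) z = hadamard (2 ^ d) x z * hadamard (2 ^ d) y z := by
  simp only [hadamard_eq_prod, ← prod_mul_distrib, Fin.xor_val_of_two_pow, Nat.testBit_xor]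
  refine prod_congr rfl fun b _ => ?_
  cases x.val.testBit b <;> cases y.val.testBit b <;> cases z.val.testBit b <;> simp

lemma hadamard_xor_right (d : ℕ) (x y z : Fin (2 ^ d)) :
    hadamard (2 ^ d) x (y ^^^ z) = hadamard (2 ^ d) x y * hadamard (2 ^ d) x z := by
  simp only [hadamard_comm _ x, hadamard_xor_left]

lemma hadamard_two_pow_right (d b : ℕ) (hb : 2 ^ b < 2 ^ d) (x : Fin (2 ^ d))
    (hx : x.val.testBit b) : hadamard (2 ^ d) x ⟨2 ^ b, hb⟩ = -1 := by
  have hb_mem : b ∈ range (2 ^ d) := mem_range.2 (b.lt_two_pow_self.trans hb)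
  rw [hadamard_eq_prod, prod_eq_single_of_mem b hb_mem fun b' _ hb' => by
    simp [Ne.symm hb']]
  simp [hx]

-- Xoring the column index with a bit `2 ^ b` set in `x` flips the sign of every term.
lemma sum_hadamard_eq_zero (d : ℕ) (x : Fin (2 ^ d)) (hx : x.val ≠ 0) :
    ∑ y, hadamard (2 ^ d) x y = 0 := by
  obtain ⟨b, hb⟩ := Nat.exists_testBit_of_ne_zero hx
  have hbd : 2 ^ b < 2 ^ d := (Nat.ge_two_pow_of_testBit hb).trans_lt x.isLt
  set e : Fin (2 ^ d) := ⟨2 ^ b, hbd⟩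
  have hinv : Function.Involutive (· ^^^ e) := fun y => by ext; simp
  have hflip : ∀ y, hadamard (2 ^ d) x (y ^^^ e) = -hadamard (2 ^ d) x y := fun y => by
    rw [hadamard_xor_right, hadamard_two_pow_right d b hbd x hb, mul_neg_one]
  have := Function.Bijective.sum_comp hinv.bijective (hadamard (2 ^ d) x)
  simp only [hflip, sum_neg_distrib] at this
  linarith

lemma hadamard_mul_transpose (d : ℕ) :
    hadamard (2 ^ d) * (hadamard (2 ^ d))ᵀ = (2 ^ d : ℝ) • 1 := by
  ext x y
  simp only [Matrix.mul_apply, Matrix.transpose_apply, ← hadamard_xor_left, Matrix.smul_apply,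
    Matrix.one_apply, smul_eq_mul, mul_ite, mul_one, mul_zero]
  split_ifs with hxy
  · subst hxy
    simp [hadamard]
  · apply sum_hadamard_eq_zero
    simpa [Fin.xor_val_of_two_pow, Fin.val_eq_val] using hxy

lemma sum_sq_mul_of_mul_transpose_eq_smul_one {ι κ ν : Type*} [Fintype κ] [Fintype ν]
    [DecidableEq κ] (φ : Matrix ι κ ℝ) {H : Matrix κ ν ℝ} {c : ℝ} (hH : H * Hᵀ = c • 1)
    (r : ι) : ∑ i, (φ * H) r i ^ 2 = c * ∑ x, φ r x ^ 2 := by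
  calc ∑ i, (φ * H) r i ^ 2 = (φ * H * (φ * H)ᵀ) r r := by
        rw [Matrix.mul_apply (M := φ * H)]
        simp only [Matrix.transpose_apply, sq]
    _ = c * (φ * φᵀ) r r := by
        rw [Matrix.transpose_mul, Matrix.mul_assoc, ← Matrix.mul_assoc H, hH, Matrix.smul_mul,
          Matrix.one_mul, Matrix.mul_smul, Matrix.smul_apply, smul_eq_mul]
    _ = c * ∑ x, φ r x ^ 2 := by
        simp only [Matrix.mul_apply, Matrix.transpose_apply, sq]

lemma card_mul_sub_sum_sq_le {ι : Type*} [Fintype ι] {m : ℕ} (φ : Matrix (Fin m) ι ℝ)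
    (hφ : ∀ r x, φ r x ∈ Set.Icc (0 : ℝ) (2 / m)) {c : ℝ} (hc : 0 ≤ c) :
    m * (c * ∑ r, ∑ x, φ r x ^ 2 - ∑ r, (∑ x, φ r x) ^ 2) ≤ c ^ 2 := by
  set T := ∑ r, ∑ x, φ r x
  have hsq : m * ∑ r, ∑ x, φ r x ^ 2 ≤ 2 * T := by
    rw [mul_sum, mul_sum]
    refine sum_le_sum fun r _ => ?_
    rw [mul_sum, mul_sum]
    refine sum_le_sum fun x _ => ?_
    obtain ⟨h0, h2⟩ := hφ r x
    have hm : (0 : ℝ) < m := by exact_mod_cast r.pos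
    rw [le_div_iff₀ hm] at h2
    nlinarith
  have hcs : T ^ 2 ≤ m * ∑ r, (∑ x, φ r x) ^ 2 := by
    simpa using sq_sum_le_card_mul_sum_sq (s := univ) (f := fun r => ∑ x, φ r x)
  nlinarith [sq_nonneg (c - T)]

lemma sum_abs_le_of_card_mul_sum_sq_le {ι : Type*} [Fintype ι] (v : ι → ℝ) {a : ℝ}
    (ha : 0 ≤ a) (h : Fintype.card ι * ∑ i, v i ^ 2 ≤ a ^ 2) : ∑ i, |v i| ≤ a := by
  have hcs := sq_sum_le_card_mul_sum_sq (s := univ) (f := fun i => |v i|)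
  simp only [sq_abs, card_univ] at hcs
  exact (pow_le_pow_iff_left₀ (sum_nonneg fun i _ => abs_nonneg _) ha two_ne_zero).1
    (hcs.trans h)

lemma card_mul_sum_sq_mul_hadamard_erase_zero_le (d m : ℕ) (φ : Matrix (Fin m) (Fin (2 ^ d)) ℝ)
    (hφ : ∀ r x, φ r x ∈ Set.Icc (0 : ℝ) (2 / m)) :
    m * ∑ i ∈ univ.erase ⟨0, Nat.two_pow_pos d⟩, ∑ r, (φ * hadamard (2 ^ d)) r i ^ 2 ≤
      (2 ^ d) ^ 2 := by
  have hcol₀ (r : Fin m) : (φ * hadamard (2 ^ d)) r ⟨0, Nat.two_pow_pos d⟩ = ∑ x, φ r x := by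
    simp only [Matrix.mul_apply, hadamard_zero_right, mul_one]
  have hrow (r : Fin m) : ∑ i, (φ * hadamard (2 ^ d)) r i ^ 2 = 2 ^ d * ∑ x, φ r x ^ 2 :=
    sum_sq_mul_of_mul_transpose_eq_smul_one φ (hadamard_mul_transpose d) r
  rw [sum_erase_eq_sub (mem_univ _), sum_comm]
  simp only [hcol₀, hrow, ← mul_sum]
  exact card_mul_sub_sum_sq_le φ hφ (by positivity)

/-- If `φ ∈ ℝ^{m×n}` has entries in `[0, 2/m]` and `f₁, …, f_n ∈ ℝ^n` are such that
`n · (f₁, f₂ - f₁, …, f_n - f₁)` equals the `n × n` Hadamard matrix `H` (`n = 2^d`,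
`n > 4`), then some index `i ≠ 1` satisfies `‖φ(f_i - f₁)‖₁ ≤ 2/√n`. -/
theorem stmt_19 (d m : ℕ) (hn : 4 < 2 ^ d)
    (φ : Matrix (Fin m) (Fin (2 ^ d)) ℝ)
    (hφ : ∀ i j, φ i j ∈ Set.Icc (0 : ℝ) (2 / m))
    (f : Fin (2 ^ d) → Fin (2 ^ d) → ℝ)
    (hf : ∀ i : Fin (2 ^ d), i ≠ ⟨0, by positivity⟩ →
      ∀ x, (2 ^ d : ℝ) * (f i x - f ⟨0, by positivity⟩ x) = hadamard (2 ^ d) x i) :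
    ∃ i : Fin (2 ^ d), i ≠ ⟨0, by positivity⟩ ∧
      ∑ r, |φ.mulVec (fun x => f i x - f ⟨0, by positivity⟩ x) r| ≤
        2 / Real.sqrt (2 ^ d) := by
  have hN : (4 : ℝ) < 2 ^ d := by exact_mod_cast hn
  set N : ℝ := 2 ^ d
  set i₀ : Fin (2 ^ d) := ⟨0, by positivity⟩
  set u := φ * hadamard (2 ^ d)
  have hcard : ((univ.erase i₀).card : ℝ) = N - 1 := by
    rw [card_erase_of_mem (mem_univ _), card_univ, Fintype.card_fin,
      Nat.cast_sub Nat.one_le_two_pow]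
    simp [N]
  obtain ⟨i, hi, hle⟩ : ∃ i ∈ univ.erase i₀, m * ∑ r, u r i ^ 2 ≤ N ^ 2 / (N - 1) := by
    refine exists_le_of_expect_le ⟨⟨1, by omega⟩, by simp [i₀]⟩ ?_
    rw [expect_eq_sum_div_card, hcard, ← mul_sum]
    exact div_le_div_of_nonneg_right (card_mul_sum_sq_mul_hadamard_erase_zero_le d m φ hφ)
      (by linarith)
  have hi₀ : i ≠ i₀ := ne_of_mem_erase hi
  have hmv : φ.mulVec (fun x => f i x - f i₀ x) = fun r => u r i / N := by
    ext r
    simp only [Matrix.mulVec, dotProduct, u, Matrix.mul_apply, sum_div, mul_div_assoc]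
    refine sum_congr rfl fun x _ => ?_
    rw [← hf i hi₀ x]
    field_simp
  refine ⟨i, hi₀, ?_⟩
  rw [hmv]
  refine sum_abs_le_of_card_mul_sum_sq_le _ (by positivity) ?_
  calc (Fintype.card (Fin m) : ℝ) * ∑ r, (u r i / N) ^ 2 = (m * ∑ r, u r i ^ 2) / N ^ 2 := by
        simp only [Fintype.card_fin, div_pow, ← sum_div, mul_div_assoc]
    _ ≤ (N ^ 2 / (N - 1)) / N ^ 2 := div_le_div_of_nonneg_right hle (by positivity)
    _ ≤ (2 / √N) ^ 2 := by
        rw [div_pow, Real.sq_sqrt (by positivity), div_div,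
          div_le_div_iff₀ (by nlinarith) (by positivity)]
        nlinarith
end
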